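/- arXiv:1907.02960 — 8 statements merged into one kernel-verified Lean document; each statement's English description precedes it below -/
import Mathlib

section
/- Let α, γ ∈ ℂ and Δ ∈ ℂ with Δ ≠ 0. Suppose f, g ∈ ℂ[λ] satisfy the identities (λ1): (α+γ+λ+Δμ)·f(λ) − (α+γ+μ+Δλ)·f(μ) = (λ−μ)·(f(λ+μ) + g(λ+μ)) and (λ2): (α+γ+μ+Δλ)·g(μ) = μ·g(λ+μ) in ℂ[λ, μ]. Then g = 0, and there exists c ∈ ℂ such that: if α+γ ≠ 0, or if α+γ = 0 and Δ ∉ {1, 2}, then f(λ) = c·(α+γ+Δλ); if α+γ = 0 and Δ = 1, then f(λ) = c·Δλ + b₂λ² for some b₂ ∈ ℂ; if α+γ = 0 and Δ = 2, then f(λ) = c·Δλ + b₃λ³ for some b₃ ∈ ℂ. Conversely all such pairs (f, g) are solutions. -/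
open MvPolynomial

private lemma evalHelper (v : Fin 2 → ℂ) (p : MvPolynomial (Fin 2) ℂ) (f : Polynomial ℂ) :
    aeval v (Polynomial.aeval p f) = f.eval (aeval v p) := by
  rw [← Polynomial.aeval_algHom_apply, Polynomial.coe_aeval_eq_eval]

private lemma evalHelper' (v : Fin 2 → ℂ) (p : MvPolynomial (Fin 2) ℂ) (f : Polynomial ℂ) :
    MvPolynomial.eval v (Polynomial.aeval p f) = f.eval (MvPolynomial.eval v p) := by
  simpa using evalHelper v p f

private lemma natIneq : ∀ k : ℕ, 4 ≤ k → (k+1)*2^k + 1 < 3^k + 2*k := by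
  intro k hk
  induction k with
  | zero => omega
  | succ n ih =>
    rcases Nat.lt_or_ge n 4 with h | h
    · have : n = 3 := by omega
      subst this; norm_num
    · have hn := ih (by omega)
      have h16 : 16 ≤ 2^n := by
        calc (16:ℕ) = 2^4 := by norm_num
        _ ≤ 2^n := Nat.pow_le_pow_right (by norm_num) h
      have e2 : 2^(n+1) = 2 * 2^n := by ring
      have e3 : 3^(n+1) = 3 * 3^n := by ring
      nlinarith [hn, h16]


/-- Classification of cocycles for extensions `0 → ℂc_γ → E → V(α,Δ) → 0` (`Δ ≠ 0`).
Polynomials `f, g ∈ ℂ[λ]` satisfy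
(λ1): `(α+γ+λ+Δμ)·f(λ) − (α+γ+μ+Δλ)·f(μ) = (λ−μ)·(f(λ+μ) + g(λ+μ))` and
(λ2): `(α+γ+μ+Δλ)·g(μ) = μ·g(λ+μ)` in `ℂ[λ, μ]` (variables: `0 = λ`, `1 = μ`)
if and only if `g = 0` and: `f = c·(α+γ+Δλ)` (which covers all solutions when
`α+γ ≠ 0`, or when `α+γ = 0` and `Δ ∉ {1, 2}`), or `α+γ = 0`, `Δ = 1` and
`f = cΔλ + b₂λ²`, or `α+γ = 0`, `Δ = 2` and `f = cΔλ + b₃λ³`. -/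
theorem extension_cocycles_V_by_trivial (α γ Δ : ℂ) (hΔ : Δ ≠ 0) (f g : Polynomial ℂ) :
    (((C (α + γ) + X 0 + C Δ * X 1) * Polynomial.aeval (X 0 : MvPolynomial (Fin 2) ℂ) f
        - (C (α + γ) + X 1 + C Δ * X 0) * Polynomial.aeval (X 1 : MvPolynomial (Fin 2) ℂ) f
        = (X 0 - X 1) * (Polynomial.aeval (X 0 + X 1 : MvPolynomial (Fin 2) ℂ) f
            + Polynomial.aeval (X 0 + X 1 : MvPolynomial (Fin 2) ℂ) g))
      ∧ ((C (α + γ) + X 1 + C Δ * X 0) * Polynomial.aeval (X 1 : MvPolynomial (Fin 2) ℂ) g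
        = X 1 * Polynomial.aeval (X 0 + X 1 : MvPolynomial (Fin 2) ℂ) g))
    ↔ (g = 0 ∧
      ((∃ c : ℂ, f = Polynomial.C c * (Polynomial.C (α + γ) + Polynomial.C Δ * Polynomial.X))
        ∨ (α + γ = 0 ∧ Δ = 1 ∧ ∃ c b₂ : ℂ, f = Polynomial.C (c * Δ) * Polynomial.X
            + Polynomial.C b₂ * Polynomial.X ^ 2)
        ∨ (α + γ = 0 ∧ Δ = 2 ∧ ∃ c b₃ : ℂ, f = Polynomial.C (c * Δ) * Polynomial.X
            + Polynomial.C b₃ * Polynomial.X ^ 3))) := by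
  constructor
  · rintro ⟨h1, h2⟩
    have P1 : ∀ x y : ℂ, (α+γ+x+Δ*y) * f.eval x - (α+γ+y+Δ*x) * f.eval y
        = (x-y) * (f.eval (x+y) + g.eval (x+y)) := by
      intro x y
      have h := congrArg (aeval (![x,y] : Fin 2 → ℂ)) h1
      simpa [evalHelper, evalHelper'] using h
    have P2 : ∀ x y : ℂ, (α+γ+y+Δ*x) * g.eval y = y * g.eval (x+y) := by
      intro x y
      have h := congrArg (aeval (![x,y] : Fin 2 → ℂ)) h2
      simpa [evalHelper, evalHelper'] using h
    -- first: g = 0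
    have hg : g = 0 := by
      by_cases hβ : α + γ = 0
      · -- g is the constant -(Δ * f.eval 0)
        have hconst : ∀ x : ℂ, x ≠ 0 → g.eval x = -(Δ * f.eval 0) := by
          intro x hx
          have h := P1 x 0
          rw [hβ] at h
          simp only [add_zero, zero_add, mul_zero, sub_zero] at h
          have hx0 : x * (g.eval x + Δ * f.eval 0) = 0 := by linear_combination -h
          have := (mul_eq_zero.mp hx0).resolve_left hx
          linear_combination this
        have hgC : g = Polynomial.C (-(Δ * f.eval 0)) := by
          have hz : g - Polynomial.C (-(Δ * f.eval 0)) = 0 := by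
            apply Polynomial.eq_zero_of_infinite_isRoot
            apply Set.Infinite.mono (s := ({(0:ℂ)}ᶜ : Set ℂ))
            · intro x hx
              have hx' : x ≠ 0 := hx
              simp [Polynomial.IsRoot, hconst x hx']
            · exact Set.Finite.infinite_compl (Set.finite_singleton 0)
          linear_combination hz
        have h := P2 1 0
        rw [hβ, hgC] at h
        simp only [Polynomial.eval_C, zero_add, add_zero, mul_one, zero_mul] at h
        have : Δ * f.eval 0 = 0 := by
          rcases mul_eq_zero.mp h with h' | h'
          · exact absurd h' hΔ
          · linear_combination -h'
        rw [hgC, this]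
        simp
      · apply Polynomial.funext
        intro y
        have h := P2 0 y
        simp only [mul_zero, add_zero, zero_add, Polynomial.eval_zero] at h
        have hβg : (α+γ) * g.eval y = 0 := by linear_combination h
        simpa using (mul_eq_zero.mp hβg).resolve_left hβ
    refine ⟨hg, ?_⟩
    have P1' : ∀ x y : ℂ, (α+γ+x+Δ*y) * f.eval x - (α+γ+y+Δ*x) * f.eval y
        = (x-y) * f.eval (x+y) := by
      intro x y
      have h := P1 x y
      rw [hg] at h
      simpa using h
    by_cases hβ : α + γ = 0
    · -- main case
      have hf0 : f.eval 0 = 0 := by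
        have h := P1' 1 0
        rw [hβ] at h
        simp only [add_zero, zero_add, mul_zero, mul_one, sub_zero, one_mul] at h
        have : Δ * f.eval 0 = 0 := by linear_combination -h
        exact (mul_eq_zero.mp this).resolve_left hΔ
      have hc0 : f.coeff 0 = 0 := by
        rw [Polynomial.coeff_zero_eq_eval_zero, hf0]
      have E1 : ∀ x : ℂ, (Δ+1) * f.eval x
          = Δ * f.coeff 1 * x + x * f.derivative.eval x := by
        intro x
        have hp0 : Polynomial.C (x * f.eval x) + Polynomial.C (Δ * f.eval x) * Polynomial.X
            - Polynomial.X * f - Polynomial.C (Δ*x) * f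
            - Polynomial.C x * (Polynomial.taylor x f)
            + Polynomial.X * (Polynomial.taylor x f) = 0 := by
          have hr : Polynomial.C (x * f.eval x) + Polynomial.C (Δ * f.eval x) * Polynomial.X
              - Polynomial.X * f - Polynomial.C (Δ*x) * f
              - Polynomial.C x * (Polynomial.taylor x f)
              + Polynomial.X * (Polynomial.taylor x f)
            = (Polynomial.C x + Polynomial.C Δ * Polynomial.X) * Polynomial.C (f.eval x)
              - (Polynomial.X + Polynomial.C (Δ*x)) * f
              - (Polynomial.C x - Polynomial.X) * (Polynomial.taylor x f) := by
            simp only [Polynomial.C_mul]; ring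
          rw [hr]
          apply Polynomial.funext
          intro y
          simp only [Polynomial.eval_sub, Polynomial.eval_add, Polynomial.eval_mul,
            Polynomial.eval_C, Polynomial.eval_X, Polynomial.eval_zero,
            Polynomial.taylor_apply, Polynomial.eval_comp]
          rw [show y + x = x + y from add_comm y x]
          have h := P1' x y
          rw [hβ] at h
          linear_combination h
        have hc := congrArg (fun q => Polynomial.coeff q 1) hp0
        simp only [Polynomial.coeff_add, Polynomial.coeff_sub, Polynomial.coeff_C_mul,
          Polynomial.coeff_X_mul, Polynomial.coeff_C, Polynomial.coeff_zero,
          Polynomial.taylor_coeff_one, Polynomial.taylor_coeff_zero, mul_one,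
          if_neg (one_ne_zero), Polynomial.coeff_X_one] at hc
        rw [hc0] at hc
        linear_combination hc
      have hcoeff : ∀ n : ℕ, n ≠ 1 → f.coeff n ≠ 0 → Δ = (n:ℂ) - 1 := by
        have E1p : Polynomial.C (Δ+1) * f
            = Polynomial.C (Δ * f.coeff 1) * Polynomial.X + Polynomial.X * f.derivative := by
          apply Polynomial.funext
          intro x
          simp only [Polynomial.eval_mul, Polynomial.eval_add, Polynomial.eval_C,
            Polynomial.eval_X]
          linear_combination E1 x
        intro n hn hfn
        match n, hn with
        | 0, _ => exact absurd hc0 hfn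
        | (m+2), _ =>
          have hc := congrArg (fun q => Polynomial.coeff q (m+2)) E1p
          simp only [Polynomial.coeff_C_mul, Polynomial.coeff_add, Polynomial.coeff_X_mul,
            Polynomial.coeff_derivative, Polynomial.coeff_X,
            if_neg (by omega : ¬ (1 : ℕ) = m + 2), mul_zero] at hc
          have hz : (Δ + 1 - ((m:ℂ) + 1 + 1)) * f.coeff (m+2) = 0 := by
            push_cast at hc ⊢
            ring_nf
            ring_nf at hc
            linear_combination hc
          rcases mul_eq_zero.mp hz with h | h
          · push_cast
            linear_combination h
          · exact absurd h hfn
      by_cases hS : ∀ n : ℕ, n ≠ 1 → f.coeff n = 0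
      · left
        refine ⟨f.coeff 1 / Δ, ?_⟩
        have hfX : f = Polynomial.C (f.coeff 1) * Polynomial.X := by
          ext n
          rcases eq_or_ne n 1 with h | h
          · subst h; simp
          · rw [hS n h, Polynomial.coeff_C_mul, Polynomial.coeff_X,
              if_neg (fun hh : 1 = n => h hh.symm), mul_zero]
        conv_lhs => rw [hfX]
        rw [hβ, map_zero, zero_add, ← mul_assoc, ← Polynomial.C_mul,
          div_mul_cancel₀ _ hΔ]
      · push_neg at hS
        obtain ⟨k, hk1, hk0⟩ := hS
        have hΔk : Δ = (k:ℂ) - 1 := hcoeff k hk1 hk0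
        have hk2 : 2 ≤ k := by
          rcases k with _ | _ | k
          · exact absurd hc0 hk0
          · exact absurd rfl hk1
          · omega
        have hfform : f = Polynomial.C (f.coeff 1) * Polynomial.X
            + Polynomial.C (f.coeff k) * Polynomial.X ^ k := by
          ext n
          rcases eq_or_ne n 1 with h1 | h1
          · subst h1
            rw [Polynomial.coeff_add, Polynomial.coeff_C_mul, Polynomial.coeff_C_mul,
              Polynomial.coeff_X_one, Polynomial.coeff_X_pow,
              if_neg (fun hh : 1 = k => hk1 hh.symm), mul_one, mul_zero, add_zero]
          · rcases eq_or_ne n k with h2 | h2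
            · subst h2
              rw [Polynomial.coeff_add, Polynomial.coeff_C_mul, Polynomial.coeff_C_mul,
                Polynomial.coeff_X, if_neg (fun hh : 1 = n => h1 hh.symm),
                Polynomial.coeff_X_pow, if_pos rfl, mul_zero, mul_one, zero_add]
            · have hzero : f.coeff n = 0 := by
                by_contra h
                have hh := hcoeff n h1 h
                rw [hΔk] at hh
                have hkn : (k:ℂ) = (n:ℂ) := by linear_combination hh
                exact h2 (Nat.cast_injective hkn).symm
              rw [hzero, Polynomial.coeff_add, Polynomial.coeff_C_mul,
                Polynomial.coeff_C_mul, Polynomial.coeff_X,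
                if_neg (fun hh : 1 = n => h1 hh.symm), Polynomial.coeff_X_pow,
                if_neg h2, mul_zero, mul_zero, add_zero]
        have key := P1' 2 1
        rw [hβ, hΔk, hfform] at key
        simp only [Polynomial.eval_add, Polynomial.eval_mul, Polynomial.eval_C,
          Polynomial.eval_X, Polynomial.eval_pow, zero_add] at key
        norm_num at key
        have hkey2 : (f.coeff k) * (((k:ℂ)+1)*2^k + 1 - (3^k + 2*(k:ℂ))) = 0 := by
          linear_combination key
        have hkeq : ((k:ℂ)+1)*2^k + 1 = 3^k + 2*(k:ℂ) := by
          have := (mul_eq_zero.mp hkey2).resolve_left hk0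
          linear_combination this
        have hknat : (k+1)*2^k + 1 = 3^k + 2*k := by
          have : (((k+1)*2^k + 1 : ℕ) : ℂ) = ((3^k + 2*k : ℕ) : ℂ) := by
            push_cast
            linear_combination hkeq
          exact_mod_cast this
        rcases Nat.lt_or_ge k 4 with hk4 | hk4
        · interval_cases k
          · -- k = 2
            right; left
            have hΔ1 : Δ = 1 := by rw [hΔk]; norm_num
            refine ⟨hβ, hΔ1, f.coeff 1, f.coeff 2, ?_⟩
            conv_lhs => rw [hfform]
            rw [hΔ1, mul_one]
          · -- k = 3
            right; right
            have hΔ2 : Δ = 2 := by rw [hΔk]; norm_num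
            refine ⟨hβ, hΔ2, f.coeff 1 / 2, f.coeff 3, ?_⟩
            conv_lhs => rw [hfform]
            rw [hΔ2, div_mul_cancel₀ _ (two_ne_zero)]
        · exact absurd hknat (Nat.ne_of_lt (natIneq k hk4))
    · -- α + γ ≠ 0
      left
      refine ⟨f.eval 0 / (α+γ), ?_⟩
      apply Polynomial.funext
      intro x
      have h := P1' x 0
      simp only [add_zero, mul_zero, sub_zero, zero_add, mul_one] at h
      simp only [Polynomial.eval_mul, Polynomial.eval_add, Polynomial.eval_C,
        Polynomial.eval_X]
      field_simp
      linear_combination h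
  · rintro ⟨rfl, hf⟩
    refine ⟨?_, by simp⟩
    rcases hf with ⟨c, rfl⟩ | ⟨hβ, hΔ1, c, b₂, rfl⟩ | ⟨hβ, hΔ2, c, b₃, rfl⟩
    · simp only [map_add, map_mul, Polynomial.aeval_C, Polynomial.aeval_X, map_zero,
        MvPolynomial.algebraMap_eq, add_zero]
      ring
    · rw [hβ, hΔ1]
      simp only [map_add, map_mul, map_pow, Polynomial.aeval_C, Polynomial.aeval_X,
        map_zero, map_one, MvPolynomial.algebraMap_eq, add_zero]
      ring
    · rw [hβ, hΔ2]
      simp only [map_add, map_mul, map_pow, Polynomial.aeval_C, Polynomial.aeval_X,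
        map_zero, map_ofNat, MvPolynomial.algebraMap_eq, add_zero]
      ring
end

section
/- Let α, γ ∈ ℂ and Δ ∈ ℂ with Δ ≠ 0. Suppose f, g ∈ ℂ[∂, λ] and a ∈ ℂ[∂] satisfy the identities in ℂ[∂, λ, μ]: (E1): (∂+α+Δλ)·f(∂+λ, μ) − (∂+α+Δμ)·f(∂+μ, λ) = (λ−μ)·(f(∂, λ+μ) + g(∂, λ+μ)); (E2): (∂+λ−γ)·f(∂, λ) = (∂+α+Δλ)·a(∂+λ); (E3): (∂+λ−γ)·g(∂, λ) = 0. Then g = 0 and there exist a polynomial φ ∈ ℂ[x] and a constant c ∈ ℂ such that f(∂, λ) = (∂+α+Δλ)·φ(∂+λ) + c and a(∂) = (∂−γ)·φ(∂) + c, where moreover c = 0 unless α + γ = 0 and Δ = 1. -/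
open MvPolynomial

/-- For `f = f(∂, λ) ∈ ℂ[∂, λ]` (variables `0 = ∂`, `1 = λ`), `subst a b f` is the
polynomial `f(a, b) ∈ ℂ[∂, λ, μ]` obtained by substituting `a` for `∂` and `b` for `λ`. -/
noncomputable def subst (a b : MvPolynomial (Fin 3) ℂ) (f : MvPolynomial (Fin 2) ℂ) :
    MvPolynomial (Fin 3) ℂ :=
  aeval ![a, b] f

/-- Classification of cocycles for extensions `0 → V(α,Δ) → E → ℂc_γ → 0` (`Δ ≠ 0`).
If `f, g ∈ ℂ[∂, λ]` and `a ∈ ℂ[∂]` satisfy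
(E1): `(∂+α+Δλ)·f(∂+λ, μ) − (∂+α+Δμ)·f(∂+μ, λ) = (λ−μ)·(f(∂, λ+μ) + g(∂, λ+μ))`
(in `ℂ[∂, λ, μ]`, variables `0 = ∂`, `1 = λ`, `2 = μ`),
(E2): `(∂+λ−γ)·f(∂, λ) = (∂+α+Δλ)·a(∂+λ)`, and (E3): `(∂+λ−γ)·g(∂, λ) = 0`,
then `g = 0` and there are `φ ∈ ℂ[x]`, `c ∈ ℂ` with
`f(∂,λ) = (∂+α+Δλ)·φ(∂+λ) + c` and `a(∂) = (∂−γ)·φ(∂) + c`, where `c = 0` unless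
`α + γ = 0` and `Δ = 1`. -/
theorem extension_cocycles_trivial_by_V (α γ Δ : ℂ) (hΔ : Δ ≠ 0)
    (f g : MvPolynomial (Fin 2) ℂ) (a : Polynomial ℂ)
    (hE1 : (X 0 + C α + C Δ * X 1) * subst (X 0 + X 1) (X 2) f
        - (X 0 + C α + C Δ * X 2) * subst (X 0 + X 2) (X 1) f
        = (X 1 - X 2) * (subst (X 0) (X 1 + X 2) f + subst (X 0) (X 1 + X 2) g))
    (hE2 : (X 0 + X 1 - C γ) * f
        = (X 0 + C α + C Δ * X 1) * Polynomial.aeval (X 0 + X 1 : MvPolynomial (Fin 2) ℂ) a)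
    (hE3 : (X 0 + X 1 - C γ) * g = 0) :
    g = 0 ∧ ∃ (φ : Polynomial ℂ) (c : ℂ),
      f = (X 0 + C α + C Δ * X 1)
            * Polynomial.aeval (X 0 + X 1 : MvPolynomial (Fin 2) ℂ) φ + C c
      ∧ a = (Polynomial.X - Polynomial.C γ) * φ + Polynomial.C c
      ∧ (¬(α + γ = 0 ∧ Δ = 1) → c = 0) := by
  have hne : (X 0 + X 1 - C γ : MvPolynomial (Fin 2) ℂ) ≠ 0 := by
    intro h
    have h2 := congrArg (eval ![γ + 1, 0]) h
    simp at h2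
  have hg : g = 0 := by
    rcases mul_eq_zero.mp hE3 with h | h
    · exact absurd h hne
    · exact h
  refine ⟨hg, ?_⟩
  by_cases hc : α + γ = 0 ∧ Δ = 1
  · obtain ⟨hαγ, hΔ1⟩ := hc
    have hα : α = -γ := by linear_combination hαγ
    subst hα hΔ1
    simp only [map_neg, map_one, one_mul] at hE2
    have key : (X 0 + X 1 - C γ : MvPolynomial (Fin 2) ℂ) * f
        = (X 0 + X 1 - C γ) * Polynomial.aeval (X 0 + X 1 : MvPolynomial (Fin 2) ℂ) a := by
      linear_combination hE2
    have hf := mul_left_cancel₀ hne key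
    set c := Polynomial.eval γ a with hcdef
    set φ := a /ₘ (Polynomial.X - Polynomial.C γ) with hφdef
    have ha : a = (Polynomial.X - Polynomial.C γ) * φ + Polynomial.C c := by
      have h := Polynomial.modByMonic_add_div a (Polynomial.X - Polynomial.C γ)
      rw [Polynomial.modByMonic_X_sub_C_eq_C_eval] at h
      linear_combination -h
    refine ⟨φ, c, ?_, ha, fun h => absurd ⟨by ring, rfl⟩ h⟩
    rw [hf, ha]
    simp only [map_add, map_mul, map_sub, Polynomial.aeval_X, Polynomial.aeval_C,
      MvPolynomial.algebraMap_eq, map_neg, map_one]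
    ring
  · have haγ : Polynomial.eval γ a = 0 := by
      have key : ∀ t : ℂ, γ + α + (Δ - 1) * t ≠ 0 → Polynomial.eval γ a = 0 := by
        intro t ht
        have h := congrArg (MvPolynomial.aeval ![γ - t, t]) hE2
        rw [map_mul, map_mul, ← Polynomial.aeval_algHom_apply] at h
        simp at h
        rcases h with h | h
        · exact absurd (by linear_combination h) ht
        · exact h
      by_cases h1 : Δ = 1
      · have h2 : α + γ ≠ 0 := fun h => hc ⟨h, h1⟩
        refine key 0 ?_
        intro h
        exact h2 (by linear_combination h)
      · refine key ((1 - γ - α) / (Δ - 1)) ?_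
        have h2 : Δ - 1 ≠ 0 := sub_ne_zero.mpr h1
        have h3 : γ + α + (Δ - 1) * ((1 - γ - α) / (Δ - 1)) = 1 := by
          field_simp
          ring
        rw [h3]
        exact one_ne_zero
    obtain ⟨φ, hφ⟩ : (Polynomial.X - Polynomial.C γ) ∣ a :=
      Polynomial.dvd_iff_isRoot.mpr haγ
    have key : (X 0 + X 1 - C γ : MvPolynomial (Fin 2) ℂ) * f
        = (X 0 + X 1 - C γ) * ((X 0 + C α + C Δ * X 1)
            * Polynomial.aeval (X 0 + X 1 : MvPolynomial (Fin 2) ℂ) φ) := by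
      rw [hφ] at hE2
      simp only [map_mul, map_sub, Polynomial.aeval_X, Polynomial.aeval_C,
        MvPolynomial.algebraMap_eq] at hE2
      linear_combination hE2
    have hf := mul_left_cancel₀ hne key
    exact ⟨φ, 0, by rw [hf]; simp, by rw [hφ]; simp, fun _ => rfl⟩
end

section
/- Let α, ᾱ, Δ, Δ̄ ∈ ℂ with α ≠ ᾱ, and suppose f, g ∈ ℂ[∂, λ] satisfy the identities in ℂ[∂, λ, μ]: (W1): (λ−μ)·(f(∂, λ+μ) + g(∂, λ+μ)) = (∂+λ+Δμ+α)·f(∂, λ) + (∂+Δ̄λ+ᾱ)·f(∂+λ, μ) − (∂+μ+Δλ+α)·f(∂, μ) − (∂+Δ̄μ+ᾱ)·f(∂+μ, λ); (W2): −μ·g(∂, λ+μ) = (∂+Δ̄λ+ᾱ)·g(∂+λ, μ) − (∂+μ+Δλ+α)·g(∂, μ). Then g = 0 and (α−ᾱ)·f(∂, μ) = (∂+Δμ+α)·f(∂, 0) − (∂+Δ̄μ+ᾱ)·f(∂+μ, 0). -/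
open MvPolynomial

/-- Substitution within `ℂ[∂, λ]` itself (used for `f(∂, 0)` and `f(∂+μ, 0)`). -/
noncomputable def subst₂ (a b : MvPolynomial (Fin 2) ℂ) (f : MvPolynomial (Fin 2) ℂ) :
    MvPolynomial (Fin 2) ℂ :=
  aeval ![a, b] f


/-- The evaluation `λ ↦ 0`: `∂ ↦ ∂`, `λ ↦ 0`, `μ ↦ λ`. -/
noncomputable def phiL : MvPolynomial (Fin 3) ℂ →ₐ[ℂ] MvPolynomial (Fin 2) ℂ :=
  aeval ![X 0, 0, X 1]

lemma phiL_subst (a b : MvPolynomial (Fin 3) ℂ) (f : MvPolynomial (Fin 2) ℂ) :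
    phiL (subst a b f) = subst₂ (phiL a) (phiL b) f := by
  have h := AlgHom.congr_fun (MvPolynomial.comp_aeval (f := ![a, b]) phiL) f
  simp only [AlgHom.comp_apply] at h
  have h2 : (fun i => phiL (![a, b] i)) = ![phiL a, phiL b] := by
    funext i; fin_cases i <;> simp
  rw [subst, subst₂, h, h2]

lemma subst₂_id (p : MvPolynomial (Fin 2) ℂ) : subst₂ (X 0) (X 1) p = p := by
  rw [subst₂]
  have : (![X 0, X 1] : Fin 2 → MvPolynomial (Fin 2) ℂ) = X := by
    funext i; fin_cases i <;> simp
  rw [this, aeval_X_left_apply]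

lemma subst₂_zero (a b : MvPolynomial (Fin 2) ℂ) : subst₂ a b (0 : MvPolynomial (Fin 2) ℂ) = 0 :=
  map_zero _

/-- For extensions `0 → V(ᾱ,Δ̄) → E → V(α,Δ) → 0` with `α ≠ ᾱ`: if `f, g ∈ ℂ[∂, λ]`
satisfy (W1): `(λ−μ)·(f(∂,λ+μ) + g(∂,λ+μ)) = (∂+λ+Δμ+α)·f(∂,λ) + (∂+Δ̄λ+ᾱ)·f(∂+λ,μ)
− (∂+μ+Δλ+α)·f(∂,μ) − (∂+Δ̄μ+ᾱ)·f(∂+μ,λ)` and (W2): `−μ·g(∂,λ+μ) =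
(∂+Δ̄λ+ᾱ)·g(∂+λ,μ) − (∂+μ+Δλ+α)·g(∂,μ)` in `ℂ[∂, λ, μ]` (variables `0 = ∂`, `1 = λ`,
`2 = μ`), then `g = 0` and `(α−ᾱ)·f(∂,μ) = (∂+Δμ+α)·f(∂,0) − (∂+Δ̄μ+ᾱ)·f(∂+μ,0)`
(here stated in `ℂ[∂, μ]` with variables `0 = ∂`, `1 = μ`), i.e. every such cocycle is
a coboundary. -/
theorem extension_cocycles_distinct_alpha (α α' Δ Δ' : ℂ) (hα : α ≠ α')
    (f g : MvPolynomial (Fin 2) ℂ)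
    (hW1 : (X 1 - X 2) * (subst (X 0) (X 1 + X 2) f + subst (X 0) (X 1 + X 2) g)
        = (X 0 + X 1 + C Δ * X 2 + C α) * subst (X 0) (X 1) f
          + (X 0 + C Δ' * X 1 + C α') * subst (X 0 + X 1) (X 2) f
          - (X 0 + X 2 + C Δ * X 1 + C α) * subst (X 0) (X 2) f
          - (X 0 + C Δ' * X 2 + C α') * subst (X 0 + X 2) (X 1) f)
    (hW2 : -(X 2) * subst (X 0) (X 1 + X 2) g
        = (X 0 + C Δ' * X 1 + C α') * subst (X 0 + X 1) (X 2) g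
          - (X 0 + X 2 + C Δ * X 1 + C α) * subst (X 0) (X 2) g) :
    g = 0 ∧
      C (α - α') * f
        = (X 0 + C Δ * X 1 + C α) * subst₂ (X 0) 0 f
          - (X 0 + C Δ' * X 1 + C α') * subst₂ (X 0 + X 1) 0 f := by
  have e0 : phiL (X 0) = X 0 := by simp [phiL]
  have e1 : phiL (X 1) = 0 := by simp [phiL]
  have e2 : phiL (X 2) = X 1 := by simp [phiL]
  have eC : ∀ c : ℂ, phiL (C c) = C c := fun c => by simp [phiL, algebraMap_eq]
  have hφ2 := congrArg phiL hW2
  simp only [map_mul, map_add, map_sub, map_neg, phiL_subst, e0, e1, e2, eC,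
    zero_add, add_zero, mul_zero, subst₂_id] at hφ2
  have hg : g = 0 := by
    have hz : C (α' - α) * g = 0 := by
      rw [map_sub]
      linear_combination -hφ2
    rcases mul_eq_zero.mp hz with h | h
    · rw [MvPolynomial.C_eq_zero, sub_eq_zero] at h
      exact absurd h.symm hα
    · exact h
  subst hg
  refine ⟨rfl, ?_⟩
  have hφ1 := congrArg phiL hW1
  simp only [map_mul, map_add, map_sub, map_neg, phiL_subst, e0, e1, e2, eC,
    zero_add, add_zero, mul_zero, subst₂_id, subst₂_zero] at hφ1
  rw [map_sub]
  linear_combination hφ1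
end

section
/- Let n ≥ 4 be an integer and Δ, Δ̄ ∈ ℂ with Δ̄ ≠ 0. If g ∈ ℂ[∂, λ] is homogeneous of total degree n in ∂ and λ and satisfies the identity (H3): −μ·g(∂, λ+μ) = (∂+Δ̄λ)·g(∂+λ, μ) − (∂+μ+Δλ)·g(∂, μ) in ℂ[∂, λ, μ], then g = 0. -/
open MvPolynomial

namespace H3Aux

open Finset

abbrev P3 := MvPolynomial (Fin 3) ℂ

noncomputable def mm (p q r : ℕ) : Fin 3 →₀ ℕ :=
  Finsupp.single 0 p + Finsupp.single 1 q + Finsupp.single 2 r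

lemma mm_eq_iff {p q r p' q' r' : ℕ} :
    mm p q r = mm p' q' r' ↔ (p = p' ∧ q = q' ∧ r = r') := by
  constructor
  · intro h
    have h0 := DFunLike.congr_fun h (0 : Fin 3)
    have h1 := DFunLike.congr_fun h (1 : Fin 3)
    have h2 := DFunLike.congr_fun h (2 : Fin 3)
    simp [mm, Finsupp.single_apply] at h0 h1 h2
    exact ⟨h0, h1, h2⟩
  · rintro ⟨rfl, rfl, rfl⟩; rfl

lemma mono_prod (p q r : ℕ) (c : ℂ) :
    (monomial (mm p q r) c : P3) = C c * X 0 ^ p * X 1 ^ q * X 2 ^ r := by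
  rw [C_apply, X_pow_eq_monomial, X_pow_eq_monomial, X_pow_eq_monomial,
    monomial_mul, monomial_mul, monomial_mul]
  simp only [mm, mul_one, zero_add]

lemma coeff_CXXX (p q r p' q' r' : ℕ) (c : ℂ) :
    coeff (mm p q r) (C c * X 0 ^ p' * X 1 ^ q' * X 2 ^ r' : P3) =
      if p' = p ∧ q' = q ∧ r' = r then c else 0 := by
  rw [← mono_prod, coeff_monomial, if_congr mm_eq_iff rfl rfl]

lemma collapse2 {f : ℕ → ℕ → ℂ} {P : ℕ → ℕ → Prop} [∀ i k, Decidable (P i k)]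
    {N : ℕ} {B : ℕ → ℕ} (i0 k0 : ℕ) (hi : i0 < N) (hk : k0 < B i0 + 1) (hP : P i0 k0)
    (huniq : ∀ i k, i < N → k < B i + 1 → P i k → i = i0 ∧ k = k0) :
    (∑ i ∈ range N, ∑ k ∈ range (B i + 1), if P i k then f i k else 0) = f i0 k0 := by
  rw [Finset.sum_eq_single i0]
  · rw [Finset.sum_eq_single k0]
    · rw [if_pos hP]
    · intro k hkm hne
      rw [if_neg]
      exact fun hPk => hne (huniq i0 k hi (mem_range.mp hkm) hPk).2
    · intro h; exact absurd (mem_range.mpr hk) h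
  · intro i him hne
    refine Finset.sum_eq_zero fun k hkm => ?_
    rw [if_neg]
    exact fun hPk => hne (huniq i k (mem_range.mp him) (mem_range.mp hkm) hPk).1
  · intro h; exact absurd (mem_range.mpr hi) h

lemma collapse2zero {f : ℕ → ℕ → ℂ} {P : ℕ → ℕ → Prop} [∀ i k, Decidable (P i k)]
    {N : ℕ} {B : ℕ → ℕ}
    (hnone : ∀ i k, i < N → k < B i + 1 → ¬ P i k) :
    (∑ i ∈ range N, ∑ k ∈ range (B i + 1), if P i k then f i k else 0) = 0 := by
  refine Finset.sum_eq_zero fun i him => Finset.sum_eq_zero fun k hkm => ?_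
  rw [if_neg (hnone i k (mem_range.mp him) (mem_range.mp hkm))]

lemma collapse1 {f : ℕ → ℂ} {P : ℕ → Prop} [∀ i, Decidable (P i)]
    {N : ℕ} (i0 : ℕ) (hi : i0 < N) (hP : P i0)
    (huniq : ∀ i, i < N → P i → i = i0) :
    (∑ i ∈ range N, if P i then f i else 0) = f i0 := by
  rw [Finset.sum_eq_single i0]
  · rw [if_pos hP]
  · intro i him hne
    rw [if_neg]
    exact fun hPk => hne (huniq i (mem_range.mp him) hPk)
  · intro h; exact absurd (mem_range.mpr hi) h

lemma collapse1zero {f : ℕ → ℂ} {P : ℕ → Prop} [∀ i, Decidable (P i)]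
    {N : ℕ} (hnone : ∀ i, i < N → ¬ P i) :
    (∑ i ∈ range N, if P i then f i else 0) = 0 := by
  refine Finset.sum_eq_zero fun i him => ?_
  rw [if_neg (hnone i (mem_range.mp him))]

lemma mono_prod2 (p q : ℕ) (c : ℂ) :
    (monomial (Finsupp.single 0 p + Finsupp.single 1 q) c : MvPolynomial (Fin 2) ℂ)
      = C c * X 0 ^ p * X 1 ^ q := by
  rw [C_apply, X_pow_eq_monomial, X_pow_eq_monomial, monomial_mul, monomial_mul]
  simp only [mul_one, zero_add]

lemma subst_expand (n : ℕ) (a : ℕ → ℂ) (A B : P3) :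
    subst A B (∑ i ∈ range (n+1),
        monomial (Finsupp.single 0 (n-i) + Finsupp.single 1 i) (a i))
      = ∑ i ∈ range (n+1), C (a i) * (A ^ (n-i) * B ^ i) := by
  unfold subst
  rw [map_sum]
  refine sum_congr rfl fun i _ => ?_
  rw [mono_prod2]
  simp only [map_mul, map_pow, aeval_X, aeval_C, algebraMap_eq,
    Matrix.cons_val_zero, Matrix.cons_val_one, Matrix.head_cons]
  ring

lemma expand {n : ℕ} {g : MvPolynomial (Fin 2) ℂ} (hhom : g.IsHomogeneous n) :
    g = ∑ i ∈ range (n+1),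
        monomial (Finsupp.single 0 (n-i) + Finsupp.single 1 i)
          (coeff (Finsupp.single 0 (n-i) + Finsupp.single 1 i) g) := by
  have hdeg : ∀ m : Fin 2 →₀ ℕ, m.degree = m 0 + m 1 := by
    intro m
    rw [Finsupp.degree_apply, Finset.sum_subset (Finset.subset_univ _)
      (fun x _ hx => Finsupp.notMem_support_iff.mp hx), Fin.sum_univ_two]
  ext m
  rw [coeff_sum]
  simp only [coeff_monomial]
  by_cases hm : m 0 + m 1 = n
  · have hm1 : m 1 ≤ n := by omega
    have hkey : (Finsupp.single (0 : Fin 2) (n - m 1) + Finsupp.single 1 (m 1)) = m := by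
      ext j
      fin_cases j
      · simp [Finsupp.single_apply]; omega
      · simp [Finsupp.single_apply]
    rw [Finset.sum_eq_single (m 1)]
    · rw [if_pos hkey, hkey]
    · intro i _ hne
      rw [if_neg]
      intro hc
      have := DFunLike.congr_fun hc (1 : Fin 2)
      simp [Finsupp.single_apply] at this
      exact hne this
    · intro h; exact absurd (mem_range.mpr (by omega)) h
  · rw [Finset.sum_eq_zero, IsHomogeneous.coeff_eq_zero hhom (by rw [hdeg]; exact hm)]
    intro i hi
    have hi' : i < n + 1 := mem_range.mp hi
    rw [if_neg]
    intro hc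
    have h0 := DFunLike.congr_fun hc (0 : Fin 2)
    have h1 := DFunLike.congr_fun hc (1 : Fin 2)
    simp [Finsupp.single_apply] at h0 h1
    omega

lemma coeff1 (n : ℕ) (a : ℕ → ℂ) (p q r : ℕ) :
    coeff (mm p q r) (-(X 2) * (∑ i ∈ range (n+1), C (a i) * (X 0 ^ (n-i) * (X 1 + X 2) ^ i)) : P3)
      = -∑ i ∈ range (n+1), ∑ k ∈ range (i+1),
          (if n-i = p ∧ k = q ∧ i-k+1 = r then a i * (i.choose k : ℂ) else 0) := by
  have h1 : (-(X 2) * (∑ i ∈ range (n+1), C (a i) * (X 0 ^ (n-i) * (X 1 + X 2) ^ i)) : P3)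
      = -∑ i ∈ range (n+1), ∑ k ∈ range (i+1),
          C (a i * (i.choose k : ℂ)) * X 0 ^ (n-i) * X 1 ^ k * X 2 ^ (i-k+1) := by
    rw [neg_mul, neg_inj, mul_sum]
    refine sum_congr rfl fun i _ => ?_
    rw [add_pow]
    simp only [Finset.sum_mul, Finset.mul_sum]
    refine sum_congr rfl fun k _ => ?_
    simp only [map_mul, map_natCast]
    ring
  rw [h1, coeff_neg, neg_inj, coeff_sum]
  refine sum_congr rfl fun i _ => ?_
  rw [coeff_sum]
  exact sum_congr rfl fun k _ => coeff_CXXX _ _ _ _ _ _ _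

lemma coeff2 (n : ℕ) (a : ℕ → ℂ) (Δ' : ℂ) (p q r : ℕ) :
    coeff (mm p q r) ((X 0 + C Δ' * X 1) * (∑ i ∈ range (n+1), C (a i) * ((X 0 + X 1) ^ (n-i) * X 2 ^ i)) : P3)
      = (∑ i ∈ range (n+1), ∑ k ∈ range (n-i+1),
          (if n-i-k+1 = p ∧ k = q ∧ i = r then a i * ((n-i).choose k : ℂ) else 0))
        + (∑ i ∈ range (n+1), ∑ k ∈ range (n-i+1),
          (if n-i-k = p ∧ k+1 = q ∧ i = r then a i * Δ' * ((n-i).choose k : ℂ) else 0)) := by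
  have h1 : ((X 0 + C Δ' * X 1) * (∑ i ∈ range (n+1), C (a i) * ((X 0 + X 1) ^ (n-i) * X 2 ^ i)) : P3)
      = (∑ i ∈ range (n+1), ∑ k ∈ range (n-i+1),
          C (a i * ((n-i).choose k : ℂ)) * X 0 ^ (n-i-k+1) * X 1 ^ k * X 2 ^ i)
        + (∑ i ∈ range (n+1), ∑ k ∈ range (n-i+1),
          C (a i * Δ' * ((n-i).choose k : ℂ)) * X 0 ^ (n-i-k) * X 1 ^ (k+1) * X 2 ^ i) := by
    rw [mul_sum, ← sum_add_distrib]
    refine sum_congr rfl fun i _ => ?_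
    rw [show ((X 0 + X 1 : P3) ^ (n-i)) = (X 1 + X 0 : P3) ^ (n-i) by rw [add_comm],
      add_pow]
    simp only [Finset.sum_mul, Finset.mul_sum]
    rw [← sum_add_distrib]
    refine sum_congr rfl fun k hk => ?_
    simp only [map_mul, map_natCast]
    ring
  rw [h1, coeff_add, coeff_sum, coeff_sum]
  congr 1
  · refine sum_congr rfl fun i _ => ?_
    rw [coeff_sum]
    exact sum_congr rfl fun k _ => coeff_CXXX _ _ _ _ _ _ _
  · refine sum_congr rfl fun i _ => ?_
    rw [coeff_sum]
    exact sum_congr rfl fun k _ => coeff_CXXX _ _ _ _ _ _ _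

lemma coeff3 (n : ℕ) (a : ℕ → ℂ) (Δ : ℂ) (p q r : ℕ) :
    coeff (mm p q r) ((X 0 + X 2 + C Δ * X 1) * (∑ i ∈ range (n+1), C (a i) * (X 0 ^ (n-i) * X 2 ^ i)) : P3)
      = (∑ i ∈ range (n+1), (if n-i+1 = p ∧ 0 = q ∧ i = r then a i else 0))
        + (∑ i ∈ range (n+1), (if n-i = p ∧ 0 = q ∧ i+1 = r then a i else 0))
        + (∑ i ∈ range (n+1), (if n-i = p ∧ 1 = q ∧ i = r then a i * Δ else 0)) := by
  have h1 : ((X 0 + X 2 + C Δ * X 1) * (∑ i ∈ range (n+1), C (a i) * (X 0 ^ (n-i) * X 2 ^ i)) : P3)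
      = (∑ i ∈ range (n+1), C (a i) * X 0 ^ (n-i+1) * X 1 ^ 0 * X 2 ^ i)
        + (∑ i ∈ range (n+1), C (a i) * X 0 ^ (n-i) * X 1 ^ 0 * X 2 ^ (i+1))
        + (∑ i ∈ range (n+1), C (a i * Δ) * X 0 ^ (n-i) * X 1 ^ 1 * X 2 ^ i) := by
    rw [mul_sum, ← sum_add_distrib, ← sum_add_distrib]
    refine sum_congr rfl fun i _ => ?_
    simp only [map_mul]
    ring
  rw [h1, coeff_add, coeff_add, coeff_sum, coeff_sum, coeff_sum]
  congr 1
  congr 1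
  all_goals exact sum_congr rfl fun i _ => coeff_CXXX _ _ _ _ _ _ _

lemma two_mul_choose_two (m : ℕ) : 2 * (m+1).choose 2 = (m+1) * m := by
  induction m with
  | zero => rfl
  | succ t ih =>
    rw [show t+1+1 = (t+1)+1 from rfl, Nat.choose_succ_succ (t+1) 1, Nat.mul_add, ih,
      Nat.choose_one_right]
    ring

lemma six_mul_choose_three (m : ℕ) : 6 * (m+2).choose 3 = (m+2) * (m+1) * m := by
  induction m with
  | zero => rfl
  | succ t ih =>
    rw [show t+1+2 = (t+2)+1 from rfl, Nat.choose_succ_succ (t+2) 2, Nat.mul_add, ih,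
      show (6:ℕ) = 3 * 2 from rfl, Nat.mul_assoc, two_mul_choose_two (t+1)]
    ring

end H3Aux

/-- Let `n ≥ 4` and `Δ̄ ≠ 0`. If `g ∈ ℂ[∂, λ]` is homogeneous of total degree `n` and
satisfies (H3): `−μ·g(∂, λ+μ) = (∂+Δ̄λ)·g(∂+λ, μ) − (∂+μ+Δλ)·g(∂, μ)` in `ℂ[∂, λ, μ]`
(variables `0 = ∂`, `1 = λ`, `2 = μ`), then `g = 0`. -/
theorem H3_no_solution_degree_ge_four (n : ℕ) (hn : 4 ≤ n) (Δ Δ' : ℂ) (hΔ' : Δ' ≠ 0)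
    (g : MvPolynomial (Fin 2) ℂ) (hhom : g.IsHomogeneous n)
    (hH3 : -(X 2) * subst (X 0) (X 1 + X 2) g
        = (X 0 + C Δ' * X 1) * subst (X 0 + X 1) (X 2) g
          - (X 0 + X 2 + C Δ * X 1) * subst (X 0) (X 2) g) :
    g = 0 := by
  classical
  open Finset H3Aux in
  set a : ℕ → ℂ := fun i =>
    coeff (Finsupp.single 0 (n-i) + Finsupp.single 1 i) g with ha
  have hg : g = ∑ i ∈ range (n+1),
      monomial (Finsupp.single 0 (n-i) + Finsupp.single 1 i) (a i) := H3Aux.expand hhom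
  rw [hg, H3Aux.subst_expand, H3Aux.subst_expand, H3Aux.subst_expand] at hH3
  suffices hall : ∀ i ≤ n, a i = 0 by
    rw [hg]
    refine Finset.sum_eq_zero fun i hi => ?_
    rw [hall i (by exact Nat.lt_succ_iff.mp (Finset.mem_range.mp hi)), monomial_zero]
  have key : ∀ p q r : ℕ,
      (-∑ i ∈ Finset.range (n+1), ∑ k ∈ Finset.range (i+1),
          (if n-i = p ∧ k = q ∧ i-k+1 = r then a i * (i.choose k : ℂ) else 0))
      = ((∑ i ∈ Finset.range (n+1), ∑ k ∈ Finset.range (n-i+1),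
          (if n-i-k+1 = p ∧ k = q ∧ i = r then a i * ((n-i).choose k : ℂ) else 0))
        + (∑ i ∈ Finset.range (n+1), ∑ k ∈ Finset.range (n-i+1),
          (if n-i-k = p ∧ k+1 = q ∧ i = r then a i * Δ' * ((n-i).choose k : ℂ) else 0)))
        - ((∑ i ∈ Finset.range (n+1), (if n-i+1 = p ∧ 0 = q ∧ i = r then a i else 0))
          + (∑ i ∈ Finset.range (n+1), (if n-i = p ∧ 0 = q ∧ i+1 = r then a i else 0))
          + (∑ i ∈ Finset.range (n+1), (if n-i = p ∧ 1 = q ∧ i = r then a i * Δ else 0))) := by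
    intro p q r
    have h := congrArg (coeff (H3Aux.mm p q r)) hH3
    rwa [H3Aux.coeff1, coeff_sub, H3Aux.coeff2, H3Aux.coeff3] at h
  -- F1 family
  have F1 : ∀ r, r ≤ n → a r * ((n:ℂ) + Δ' - Δ) = 0 := by
    intro r hr
    have h := key (n-r) 1 r
    have e1 : (∑ i ∈ Finset.range (n+1), ∑ k ∈ Finset.range (i+1),
        (if n-i = n-r ∧ k = 1 ∧ i-k+1 = r then a i * (i.choose k : ℂ) else 0))
        = (r : ℂ) * a r := by
      rcases Nat.eq_zero_or_pos r with hr0 | hr1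
      · subst hr0
        rw [H3Aux.collapse2zero (fun i k hi hk => by omega)]
        norm_num
      · rw [H3Aux.collapse2 (N := n+1) (B := fun i => i)
            (P := fun i k => n-i = n-r ∧ k = 1 ∧ i-k+1 = r)
            (f := fun i k => a i * (i.choose k : ℂ)) r 1 (by omega)
            (by show (1:ℕ) < r + 1; omega)
            (by refine ⟨rfl, rfl, ?_⟩; omega)
            (fun i k hi hk hP => by omega)]
        rw [Nat.choose_one_right]
        push_cast
        ring
    have e2 : (∑ i ∈ Finset.range (n+1), ∑ k ∈ Finset.range (n-i+1),
        (if n-i-k+1 = n-r ∧ k = 1 ∧ i = r then a i * ((n-i).choose k : ℂ) else 0))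
        = ((n-r : ℕ) : ℂ) * a r := by
      rcases Nat.lt_or_ge r n with hrn | hrn
      · rw [H3Aux.collapse2 (N := n+1) (B := fun i => n - i)
            (P := fun i k => n-i-k+1 = n-r ∧ k = 1 ∧ i = r)
            (f := fun i k => a i * ((n-i).choose k : ℂ)) r 1 (by omega)
            (by show (1:ℕ) < n - r + 1; omega)
            (by refine ⟨?_, rfl, rfl⟩; omega)
            (fun i k hi hk hP => by omega)]
        rw [Nat.choose_one_right]
        ring
      · have hrn' : r = n := by omega
        subst hrn'
        rw [H3Aux.collapse2zero (fun i k hi hk => by omega)]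
        simp
    have e3 : (∑ i ∈ Finset.range (n+1), ∑ k ∈ Finset.range (n-i+1),
        (if n-i-k = n-r ∧ k+1 = 1 ∧ i = r then a i * Δ' * ((n-i).choose k : ℂ) else 0))
        = Δ' * a r := by
      rw [H3Aux.collapse2 (N := n+1) (B := fun i => n - i)
          (P := fun i k => n-i-k = n-r ∧ k+1 = 1 ∧ i = r)
          (f := fun i k => a i * Δ' * ((n-i).choose k : ℂ)) r 0 (by omega)
          (by show (0:ℕ) < n - r + 1; omega)
          (by refine ⟨?_, rfl, rfl⟩; omega)
          (fun i k hi hk hP => by omega)]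
      rw [Nat.choose_zero_right]
      push_cast
      ring
    have e4 : (∑ i ∈ Finset.range (n+1), (if n-i+1 = n-r ∧ 0 = 1 ∧ i = r then a i else 0)) = 0 :=
      H3Aux.collapse1zero (fun i hi => by omega)
    have e5 : (∑ i ∈ Finset.range (n+1), (if n-i = n-r ∧ 0 = 1 ∧ i+1 = r then a i else 0)) = 0 :=
      H3Aux.collapse1zero (fun i hi => by omega)
    have e6 : (∑ i ∈ Finset.range (n+1), (if n-i = n-r ∧ 1 = 1 ∧ i = r then a i * Δ else 0))
        = a r * Δ :=
      H3Aux.collapse1 (N := n+1) (P := fun i => n-i = n-r ∧ 1 = 1 ∧ i = r)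
        (f := fun i => a i * Δ) r (by omega) (by refine ⟨rfl, rfl, rfl⟩)
        (fun i hi hP => by omega)
    rw [e1, e2, e3, e4, e5, e6] at h
    have hcast : ((n - r : ℕ) : ℂ) = (n : ℂ) - (r : ℂ) := by
      push_cast [Nat.cast_sub hr]
      ring
    rw [hcast] at h
    linear_combination -h

  -- F2 family : for 2 ≤ q ≤ n-1
  have F2 : ∀ q, 2 ≤ q → q ≤ n-1 →
      a q = -(a 1 * (((n-1).choose q : ℂ) + Δ' * ((n-1).choose (q-1) : ℂ))) := by
    intro q hq2 hqn
    have h := key (n-q) q 1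
    have e1 : (∑ i ∈ Finset.range (n+1), ∑ k ∈ Finset.range (i+1),
        (if n-i = n-q ∧ k = q ∧ i-k+1 = 1 then a i * (i.choose k : ℂ) else 0))
        = a q := by
      rw [H3Aux.collapse2 (N := n+1) (B := fun i => i)
          (P := fun i k => n-i = n-q ∧ k = q ∧ i-k+1 = 1)
          (f := fun i k => a i * (i.choose k : ℂ)) q q (by omega)
          (by show q < q + 1; omega) (by refine ⟨rfl, rfl, ?_⟩; omega)
          (fun i k hi hk hP => by omega)]
      rw [Nat.choose_self]
      push_cast; ring
    have e2 : (∑ i ∈ Finset.range (n+1), ∑ k ∈ Finset.range (n-i+1),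
        (if n-i-k+1 = n-q ∧ k = q ∧ i = 1 then a i * ((n-i).choose k : ℂ) else 0))
        = a 1 * ((n-1).choose q : ℂ) := by
      rw [H3Aux.collapse2 (N := n+1) (B := fun i => n - i)
          (P := fun i k => n-i-k+1 = n-q ∧ k = q ∧ i = 1)
          (f := fun i k => a i * ((n-i).choose k : ℂ)) 1 q (by omega)
          (by show q < n - 1 + 1; omega) (by refine ⟨?_, rfl, rfl⟩; omega)
          (fun i k hi hk hP => by omega)]
    have e3 : (∑ i ∈ Finset.range (n+1), ∑ k ∈ Finset.range (n-i+1),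
        (if n-i-k = n-q ∧ k+1 = q ∧ i = 1 then a i * Δ' * ((n-i).choose k : ℂ) else 0))
        = a 1 * Δ' * ((n-1).choose (q-1) : ℂ) := by
      rw [H3Aux.collapse2 (N := n+1) (B := fun i => n - i)
          (P := fun i k => n-i-k = n-q ∧ k+1 = q ∧ i = 1)
          (f := fun i k => a i * Δ' * ((n-i).choose k : ℂ)) 1 (q-1) (by omega)
          (by show q - 1 < n - 1 + 1; omega) (by refine ⟨?_, ?_, rfl⟩ <;> omega)
          (fun i k hi hk hP => by omega)]
    have e4 : (∑ i ∈ Finset.range (n+1), (if n-i+1 = n-q ∧ 0 = q ∧ i = 1 then a i else 0)) = 0 :=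
      H3Aux.collapse1zero (fun i hi => by omega)
    have e5 : (∑ i ∈ Finset.range (n+1), (if n-i = n-q ∧ 0 = q ∧ i+1 = 1 then a i else 0)) = 0 :=
      H3Aux.collapse1zero (fun i hi => by omega)
    have e6 : (∑ i ∈ Finset.range (n+1), (if n-i = n-q ∧ 1 = q ∧ i = 1 then a i * Δ else 0)) = 0 :=
      H3Aux.collapse1zero (fun i hi => by omega)
    rw [e1, e2, e3, e4, e5, e6] at h
    linear_combination -h
  -- F2n : a n = -(Δ' * a 1)
  have F2n : a n = -(Δ' * a 1) := by
    have h := key 0 n 1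
    have e1 : (∑ i ∈ Finset.range (n+1), ∑ k ∈ Finset.range (i+1),
        (if n-i = 0 ∧ k = n ∧ i-k+1 = 1 then a i * (i.choose k : ℂ) else 0))
        = a n := by
      rw [H3Aux.collapse2 (N := n+1) (B := fun i => i)
          (P := fun i k => n-i = 0 ∧ k = n ∧ i-k+1 = 1)
          (f := fun i k => a i * (i.choose k : ℂ)) n n (by omega)
          (by show n < n + 1; omega) (by refine ⟨?_, rfl, ?_⟩ <;> omega)
          (fun i k hi hk hP => by omega)]
      rw [Nat.choose_self]
      push_cast; ring
    have e2 : (∑ i ∈ Finset.range (n+1), ∑ k ∈ Finset.range (n-i+1),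
        (if n-i-k+1 = 0 ∧ k = n ∧ i = 1 then a i * ((n-i).choose k : ℂ) else 0)) = 0 :=
      H3Aux.collapse2zero (fun i k hi hk => by omega)
    have e3 : (∑ i ∈ Finset.range (n+1), ∑ k ∈ Finset.range (n-i+1),
        (if n-i-k = 0 ∧ k+1 = n ∧ i = 1 then a i * Δ' * ((n-i).choose k : ℂ) else 0))
        = a 1 * Δ' := by
      rw [H3Aux.collapse2 (N := n+1) (B := fun i => n - i)
          (P := fun i k => n-i-k = 0 ∧ k+1 = n ∧ i = 1)
          (f := fun i k => a i * Δ' * ((n-i).choose k : ℂ)) 1 (n-1) (by omega)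
          (by show n - 1 < n - 1 + 1; omega) (by refine ⟨?_, ?_, rfl⟩ <;> omega)
          (fun i k hi hk hP => by omega)]
      rw [show n - 1 = (n-1 : ℕ) from rfl, Nat.choose_self]
      push_cast; ring
    have e4 : (∑ i ∈ Finset.range (n+1), (if n-i+1 = 0 ∧ 0 = n ∧ i = 1 then a i else 0)) = 0 :=
      H3Aux.collapse1zero (fun i hi => by omega)
    have e5 : (∑ i ∈ Finset.range (n+1), (if n-i = 0 ∧ 0 = n ∧ i+1 = 1 then a i else 0)) = 0 :=
      H3Aux.collapse1zero (fun i hi => by omega)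
    have e6 : (∑ i ∈ Finset.range (n+1), (if n-i = 0 ∧ 1 = n ∧ i = 1 then a i * Δ else 0)) = 0 :=
      H3Aux.collapse1zero (fun i hi => by omega)
    rw [e1, e2, e3, e4, e5, e6] at h
    linear_combination -h
  -- F3 : 0 = a 0 * C(n,2) + a 0 * Δ' * n
  have F3 : (0:ℂ) = a 0 * (n.choose 2 : ℂ) + a 0 * Δ' * (n:ℂ) := by
    have h := key (n-1) 2 0
    have e1 : (∑ i ∈ Finset.range (n+1), ∑ k ∈ Finset.range (i+1),
        (if n-i = n-1 ∧ k = 2 ∧ i-k+1 = 0 then a i * (i.choose k : ℂ) else 0)) = 0 :=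
      H3Aux.collapse2zero (fun i k hi hk => by omega)
    have e2 : (∑ i ∈ Finset.range (n+1), ∑ k ∈ Finset.range (n-i+1),
        (if n-i-k+1 = n-1 ∧ k = 2 ∧ i = 0 then a i * ((n-i).choose k : ℂ) else 0))
        = a 0 * (n.choose 2 : ℂ) := by
      rw [H3Aux.collapse2 (N := n+1) (B := fun i => n - i)
          (P := fun i k => n-i-k+1 = n-1 ∧ k = 2 ∧ i = 0)
          (f := fun i k => a i * ((n-i).choose k : ℂ)) 0 2 (by omega)
          (by show 2 < n - 0 + 1; omega) (by refine ⟨?_, rfl, rfl⟩; omega)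
          (fun i k hi hk hP => by omega)]
      norm_num
    have e3 : (∑ i ∈ Finset.range (n+1), ∑ k ∈ Finset.range (n-i+1),
        (if n-i-k = n-1 ∧ k+1 = 2 ∧ i = 0 then a i * Δ' * ((n-i).choose k : ℂ) else 0))
        = a 0 * Δ' * (n:ℂ) := by
      rw [H3Aux.collapse2 (N := n+1) (B := fun i => n - i)
          (P := fun i k => n-i-k = n-1 ∧ k+1 = 2 ∧ i = 0)
          (f := fun i k => a i * Δ' * ((n-i).choose k : ℂ)) 0 1 (by omega)
          (by show 1 < n - 0 + 1; omega) (by refine ⟨?_, rfl, rfl⟩; omega)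
          (fun i k hi hk hP => by omega)]
      norm_num
    have e4 : (∑ i ∈ Finset.range (n+1), (if n-i+1 = n-1 ∧ 0 = 2 ∧ i = 0 then a i else 0)) = 0 :=
      H3Aux.collapse1zero (fun i hi => by omega)
    have e5 : (∑ i ∈ Finset.range (n+1), (if n-i = n-1 ∧ 0 = 2 ∧ i+1 = 0 then a i else 0)) = 0 :=
      H3Aux.collapse1zero (fun i hi => by omega)
    have e6 : (∑ i ∈ Finset.range (n+1), (if n-i = n-1 ∧ 1 = 2 ∧ i = 0 then a i * Δ else 0)) = 0 :=
      H3Aux.collapse1zero (fun i hi => by omega)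
    rw [e1, e2, e3, e4, e5, e6] at h
    linear_combination h
  -- F4 : 0 = a 0 * C(n,3) + a 0 * Δ' * C(n,2)
  have F4 : (0:ℂ) = a 0 * (n.choose 3 : ℂ) + a 0 * Δ' * (n.choose 2 : ℂ) := by
    have h := key (n-2) 3 0
    have e1 : (∑ i ∈ Finset.range (n+1), ∑ k ∈ Finset.range (i+1),
        (if n-i = n-2 ∧ k = 3 ∧ i-k+1 = 0 then a i * (i.choose k : ℂ) else 0)) = 0 :=
      H3Aux.collapse2zero (fun i k hi hk => by omega)
    have e2 : (∑ i ∈ Finset.range (n+1), ∑ k ∈ Finset.range (n-i+1),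
        (if n-i-k+1 = n-2 ∧ k = 3 ∧ i = 0 then a i * ((n-i).choose k : ℂ) else 0))
        = a 0 * (n.choose 3 : ℂ) := by
      rw [H3Aux.collapse2 (N := n+1) (B := fun i => n - i)
          (P := fun i k => n-i-k+1 = n-2 ∧ k = 3 ∧ i = 0)
          (f := fun i k => a i * ((n-i).choose k : ℂ)) 0 3 (by omega)
          (by show 3 < n - 0 + 1; omega) (by refine ⟨?_, rfl, rfl⟩; omega)
          (fun i k hi hk hP => by omega)]
      norm_num
    have e3 : (∑ i ∈ Finset.range (n+1), ∑ k ∈ Finset.range (n-i+1),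
        (if n-i-k = n-2 ∧ k+1 = 3 ∧ i = 0 then a i * Δ' * ((n-i).choose k : ℂ) else 0))
        = a 0 * Δ' * (n.choose 2 : ℂ) := by
      rw [H3Aux.collapse2 (N := n+1) (B := fun i => n - i)
          (P := fun i k => n-i-k = n-2 ∧ k+1 = 3 ∧ i = 0)
          (f := fun i k => a i * Δ' * ((n-i).choose k : ℂ)) 0 2 (by omega)
          (by show 2 < n - 0 + 1; omega) (by refine ⟨?_, rfl, rfl⟩; omega)
          (fun i k hi hk hP => by omega)]
      norm_num
    have e4 : (∑ i ∈ Finset.range (n+1), (if n-i+1 = n-2 ∧ 0 = 3 ∧ i = 0 then a i else 0)) = 0 :=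
      H3Aux.collapse1zero (fun i hi => by omega)
    have e5 : (∑ i ∈ Finset.range (n+1), (if n-i = n-2 ∧ 0 = 3 ∧ i+1 = 0 then a i else 0)) = 0 :=
      H3Aux.collapse1zero (fun i hi => by omega)
    have e6 : (∑ i ∈ Finset.range (n+1), (if n-i = n-2 ∧ 1 = 3 ∧ i = 0 then a i * Δ else 0)) = 0 :=
      H3Aux.collapse1zero (fun i hi => by omega)
    rw [e1, e2, e3, e4, e5, e6] at h
    linear_combination h
  -- F5 : -(3 * a 3) = a 2 * C(n-2,2) + a 2 * Δ' * (n-2)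
  have F5 : -(3 * a 3) = a 2 * ((n-2).choose 2 : ℂ) + a 2 * Δ' * ((n-2 : ℕ) : ℂ) := by
    have h := key (n-3) 2 2
    have e1 : (∑ i ∈ Finset.range (n+1), ∑ k ∈ Finset.range (i+1),
        (if n-i = n-3 ∧ k = 2 ∧ i-k+1 = 2 then a i * (i.choose k : ℂ) else 0))
        = 3 * a 3 := by
      rw [H3Aux.collapse2 (N := n+1) (B := fun i => i)
          (P := fun i k => n-i = n-3 ∧ k = 2 ∧ i-k+1 = 2)
          (f := fun i k => a i * (i.choose k : ℂ)) 3 2 (by omega)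
          (by show 2 < 3 + 1; omega) (by refine ⟨?_, rfl, ?_⟩ <;> omega)
          (fun i k hi hk hP => by omega)]
      norm_num; ring
    have e2 : (∑ i ∈ Finset.range (n+1), ∑ k ∈ Finset.range (n-i+1),
        (if n-i-k+1 = n-3 ∧ k = 2 ∧ i = 2 then a i * ((n-i).choose k : ℂ) else 0))
        = a 2 * ((n-2).choose 2 : ℂ) := by
      rw [H3Aux.collapse2 (N := n+1) (B := fun i => n - i)
          (P := fun i k => n-i-k+1 = n-3 ∧ k = 2 ∧ i = 2)
          (f := fun i k => a i * ((n-i).choose k : ℂ)) 2 2 (by omega)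
          (by show 2 < n - 2 + 1; omega) (by refine ⟨?_, rfl, rfl⟩; omega)
          (fun i k hi hk hP => by omega)]
    have e3 : (∑ i ∈ Finset.range (n+1), ∑ k ∈ Finset.range (n-i+1),
        (if n-i-k = n-3 ∧ k+1 = 2 ∧ i = 2 then a i * Δ' * ((n-i).choose k : ℂ) else 0))
        = a 2 * Δ' * ((n-2 : ℕ) : ℂ) := by
      rw [H3Aux.collapse2 (N := n+1) (B := fun i => n - i)
          (P := fun i k => n-i-k = n-3 ∧ k+1 = 2 ∧ i = 2)
          (f := fun i k => a i * Δ' * ((n-i).choose k : ℂ)) 2 1 (by omega)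
          (by show 1 < n - 2 + 1; omega) (by refine ⟨?_, rfl, rfl⟩; omega)
          (fun i k hi hk hP => by omega)]
      rw [Nat.choose_one_right]
    have e4 : (∑ i ∈ Finset.range (n+1), (if n-i+1 = n-3 ∧ 0 = 2 ∧ i = 2 then a i else 0)) = 0 :=
      H3Aux.collapse1zero (fun i hi => by omega)
    have e5 : (∑ i ∈ Finset.range (n+1), (if n-i = n-3 ∧ 0 = 2 ∧ i+1 = 2 then a i else 0)) = 0 :=
      H3Aux.collapse1zero (fun i hi => by omega)
    have e6 : (∑ i ∈ Finset.range (n+1), (if n-i = n-3 ∧ 1 = 2 ∧ i = 2 then a i * Δ else 0)) = 0 :=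
      H3Aux.collapse1zero (fun i hi => by omega)
    rw [e1, e2, e3, e4, e5, e6] at h
    linear_combination h
  -- F6 : -(n * a n) = Δ' * a 2
  have F6 : -((n:ℂ) * a n) = Δ' * a 2 := by
    have h := key 0 (n-1) 2
    have e1 : (∑ i ∈ Finset.range (n+1), ∑ k ∈ Finset.range (i+1),
        (if n-i = 0 ∧ k = n-1 ∧ i-k+1 = 2 then a i * (i.choose k : ℂ) else 0))
        = (n:ℂ) * a n := by
      rw [H3Aux.collapse2 (N := n+1) (B := fun i => i)
          (P := fun i k => n-i = 0 ∧ k = n-1 ∧ i-k+1 = 2)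
          (f := fun i k => a i * (i.choose k : ℂ)) n (n-1) (by omega)
          (by show n - 1 < n + 1; omega) (by refine ⟨?_, rfl, ?_⟩ <;> omega)
          (fun i k hi hk hP => by omega)]
      rw [← Nat.choose_symm (by omega : n - 1 ≤ n), show n - (n-1) = 1 from by omega,
        Nat.choose_one_right]
      ring
    have e2 : (∑ i ∈ Finset.range (n+1), ∑ k ∈ Finset.range (n-i+1),
        (if n-i-k+1 = 0 ∧ k = n-1 ∧ i = 2 then a i * ((n-i).choose k : ℂ) else 0)) = 0 :=
      H3Aux.collapse2zero (fun i k hi hk => by omega)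
    have e3 : (∑ i ∈ Finset.range (n+1), ∑ k ∈ Finset.range (n-i+1),
        (if n-i-k = 0 ∧ k+1 = n-1 ∧ i = 2 then a i * Δ' * ((n-i).choose k : ℂ) else 0))
        = a 2 * Δ' := by
      rw [H3Aux.collapse2 (N := n+1) (B := fun i => n - i)
          (P := fun i k => n-i-k = 0 ∧ k+1 = n-1 ∧ i = 2)
          (f := fun i k => a i * Δ' * ((n-i).choose k : ℂ)) 2 (n-2) (by omega)
          (by show n - 2 < n - 2 + 1; omega) (by refine ⟨?_, ?_, rfl⟩ <;> omega)
          (fun i k hi hk hP => by omega)]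
      rw [show n - 2 = (n-2 : ℕ) from rfl, Nat.choose_self]
      push_cast; ring
    have e4 : (∑ i ∈ Finset.range (n+1), (if n-i+1 = 0 ∧ 0 = n-1 ∧ i = 2 then a i else 0)) = 0 :=
      H3Aux.collapse1zero (fun i hi => by omega)
    have e5 : (∑ i ∈ Finset.range (n+1), (if n-i = 0 ∧ 0 = n-1 ∧ i+1 = 2 then a i else 0)) = 0 :=
      H3Aux.collapse1zero (fun i hi => by omega)
    have e6 : (∑ i ∈ Finset.range (n+1), (if n-i = 0 ∧ 1 = n-1 ∧ i = 2 then a i * Δ else 0)) = 0 :=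
      H3Aux.collapse1zero (fun i hi => by omega)
    rw [e1, e2, e3, e4, e5, e6] at h
    linear_combination h
  -- cast identities for binomial coefficients
  have hn0 : (n:ℂ) ≠ 0 := by
    exact_mod_cast Nat.cast_ne_zero.mpr (by omega)
  have hcast1 : ((n-1 : ℕ) : ℂ) = (n:ℂ) - 1 := by
    push_cast [Nat.cast_sub (by omega : 1 ≤ n)]; ring
  have hcast2 : ((n-2 : ℕ) : ℂ) = (n:ℂ) - 2 := by
    push_cast [Nat.cast_sub (by omega : 2 ≤ n)]; ring
  have hc2 : (2:ℂ) * (n.choose 2 : ℂ) = (n:ℂ) * ((n:ℂ) - 1) := by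
    obtain ⟨m, rfl⟩ : ∃ m, n = m + 1 := ⟨n - 1, by omega⟩
    have hnat : ((2 * (m+1).choose 2 : ℕ) : ℂ) = (((m+1) * m : ℕ) : ℂ) := by
      rw [H3Aux.two_mul_choose_two m]
    push_cast at hnat
    linear_combination (norm := (push_cast; ring1)) hnat
  have hc3 : (6:ℂ) * (n.choose 3 : ℂ) = (n:ℂ) * ((n:ℂ) - 1) * ((n:ℂ) - 2) := by
    obtain ⟨m, rfl⟩ : ∃ m, n = m + 2 := ⟨n - 2, by omega⟩
    have hnat : ((6 * (m+2).choose 3 : ℕ) : ℂ) = (((m+2) * (m+1) * m : ℕ) : ℂ) := by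
      rw [H3Aux.six_mul_choose_three m]
    push_cast at hnat
    linear_combination (norm := (push_cast; ring1)) hnat
  have hd2 : (2:ℂ) * ((n-1).choose 2 : ℂ) = ((n:ℂ) - 1) * ((n:ℂ) - 2) := by
    obtain ⟨m, rfl⟩ : ∃ m, n = m + 4 := ⟨n - 4, by omega⟩
    rw [show m + 4 - 1 = (m + 2) + 1 from by omega]
    have hnat : ((2 * ((m+2)+1).choose 2 : ℕ) : ℂ) = ((((m+2)+1) * (m+2) : ℕ) : ℂ) := by
      rw [H3Aux.two_mul_choose_two (m+2)]
    push_cast at hnat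
    linear_combination (norm := (push_cast; ring1)) hnat
  have hd3 : (6:ℂ) * ((n-1).choose 3 : ℂ) = ((n:ℂ) - 1) * ((n:ℂ) - 2) * ((n:ℂ) - 3) := by
    obtain ⟨m, rfl⟩ : ∃ m, n = m + 4 := ⟨n - 4, by omega⟩
    rw [show m + 4 - 1 = (m + 1) + 2 from by omega]
    have hnat : ((6 * ((m+1)+2).choose 3 : ℕ) : ℂ) = ((((m+1)+2) * ((m+1)+1) * (m+1) : ℕ) : ℂ) := by
      rw [H3Aux.six_mul_choose_three (m+1)]
    push_cast at hnat
    linear_combination (norm := (push_cast; ring1)) hnat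
  have he2 : (2:ℂ) * ((n-2).choose 2 : ℂ) = ((n:ℂ) - 2) * ((n:ℂ) - 3) := by
    obtain ⟨m, rfl⟩ : ∃ m, n = m + 4 := ⟨n - 4, by omega⟩
    rw [show m + 4 - 2 = (m + 1) + 1 from by omega]
    have hnat : ((2 * ((m+1)+1).choose 2 : ℕ) : ℂ) = ((((m+1)+1) * (m+1) : ℕ) : ℂ) := by
      rw [H3Aux.two_mul_choose_two (m+1)]
    push_cast at hnat
    linear_combination (norm := (push_cast; ring1)) hnat
  -- a 0 = 0
  have hA0 : a 0 = 0 := by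
    have hkey : a 0 * ((n.choose 2 : ℂ)^2 - (n:ℂ) * (n.choose 3 : ℂ)) = 0 := by
      linear_combination (n:ℂ) * F4 - (n.choose 2 : ℂ) * F3
    have hfac : (12:ℂ) * ((n.choose 2 : ℂ)^2 - (n:ℂ) * (n.choose 3 : ℂ))
        = (n:ℂ)^2 * ((n:ℂ) - 1) * ((n:ℂ) + 1) := by
      linear_combination (3 * (2*(n.choose 2 : ℂ) + (n:ℂ)*((n:ℂ)-1))) * hc2 - 2*(n:ℂ)*hc3
    have hne : ((n.choose 2 : ℂ)^2 - (n:ℂ) * (n.choose 3 : ℂ)) ≠ 0 := by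
      intro h0
      rw [h0, mul_zero] at hfac
      have h1 : (n:ℂ) - 1 ≠ 0 := by
        rw [← hcast1]
        exact Nat.cast_ne_zero.mpr (by omega)
      have h2 : (n:ℂ) + 1 ≠ 0 := by
        have hx : ((n+1 : ℕ) : ℂ) ≠ 0 := Nat.cast_ne_zero.mpr (by omega)
        push_cast at hx
        exact hx
      exact (mul_ne_zero (mul_ne_zero (pow_ne_zero 2 hn0) h1) h2) hfac.symm
    exact (mul_eq_zero.mp hkey).resolve_right hne
  -- a 2 = n * a 1
  have hA2 : a 2 = (n:ℂ) * a 1 := by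
    have hz : Δ' * (a 2 - (n:ℂ) * a 1) = 0 := by
      linear_combination -F6 - (n:ℂ) * F2n
    rcases mul_eq_zero.mp hz with h | h
    · exact absurd h hΔ'
    · exact sub_eq_zero.mp h
  have h22 := F2 2 (by omega) (by omega)
  have h23 := F2 3 (by omega) (by omega)
  rw [show (2:ℕ) - 1 = 1 from rfl, Nat.choose_one_right] at h22
  rw [show (3:ℕ) - 1 = 2 from rfl] at h23
  have E1 : a 1 * ((n:ℂ) + (((n-1).choose 2 : ℕ) : ℂ) + Δ' * ((n:ℂ) - 1)) = 0 := by
    linear_combination h22 - hA2 - a 1 * Δ' * hcast1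
  have E2 : a 1 * (3*(((n-1).choose 3 : ℕ):ℂ) + 3*Δ'*(((n-1).choose 2 : ℕ):ℂ)
      - (n:ℂ)*(((n-2).choose 2 : ℕ):ℂ) - (n:ℂ)*Δ'*((n:ℂ)-2)) = 0 := by
    linear_combination F5 + 3*h23 + ((((n-2).choose 2 : ℕ):ℂ) + Δ'*(((n-2:ℕ):ℕ):ℂ))*hA2
      + (n:ℂ)*(a 1)*Δ'*hcast2
  have key2 : a 1 * (((n:ℂ)-2) * ((n:ℂ)-3)) * (Δ' - 1) = 0 := by
    linear_combination 2*E2 - a 1 * hd3 - 3*Δ'*(a 1)*hd2 + (n:ℂ)*(a 1)*he2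
  have hn2 : (n:ℂ) - 2 ≠ 0 := by
    rw [← hcast2]; exact Nat.cast_ne_zero.mpr (by omega)
  have hn3 : (n:ℂ) - 3 ≠ 0 := by
    have hc : ((n-3:ℕ):ℂ) = (n:ℂ) - 3 := by
      push_cast [Nat.cast_sub (by omega : 3 ≤ n)]; ring
    rw [← hc]; exact Nat.cast_ne_zero.mpr (by omega)
  have hA1 : a 1 = 0 := by
    rcases mul_eq_zero.mp key2 with h | hd1
    · rcases mul_eq_zero.mp h with h' | h''
      · exact h'
      · exact absurd h'' (mul_ne_zero hn2 hn3)
    · have hΔ1 : Δ' = 1 := by linear_combination hd1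
      have hpos : (n:ℂ) + (((n-1).choose 2 : ℕ) : ℂ) + ((n:ℂ) - 1) ≠ 0 := by
        have hc : (n:ℂ) + (((n-1).choose 2 : ℕ) : ℂ) + ((n:ℂ) - 1)
            = ((n + (n-1).choose 2 + (n-1) : ℕ) : ℂ) := by
          push_cast [Nat.cast_sub (by omega : 1 ≤ n)]; ring
        rw [hc]; exact Nat.cast_ne_zero.mpr (by omega)
      rw [hΔ1, one_mul] at E1
      rcases mul_eq_zero.mp E1 with h' | h''
      · exact h'
      · exact absurd h'' hpos
  intro i hi
  by_cases h0 : i = 0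
  · rw [h0]; exact hA0
  by_cases h1 : i = 1
  · rw [h1]; exact hA1
  by_cases hnn : i = n
  · rw [hnn, F2n, hA1]; ring
  · rw [F2 i (by omega) (by omega), hA1]; ring
end

section
/- Let Δ = Δ̄ ∈ ℂ with Δ ≠ 0, let a₀ ∈ ℂ, and suppose there exists f ∈ ℂ[∂, λ] such that the identity (L3): (λ−μ)·(f(∂, λ+μ) + a₀) = (∂+λ+Δμ)·f(∂, λ) + (∂+Δ̄λ)·f(∂+λ, μ) − (∂+μ+Δλ)·f(∂, μ) − (∂+Δ̄μ)·f(∂+μ, λ) holds in ℂ[∂, λ, μ]. Then a₀ = 0. -/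
open MvPolynomial

lemma eval_subst (v : Fin 3 → ℂ) (a b : MvPolynomial (Fin 3) ℂ) (f : MvPolynomial (Fin 2) ℂ) :
    eval v (subst a b f) = eval ![eval v a, eval v b] f := by
  induction f using MvPolynomial.induction_on with
  | C c => simp [subst]
  | add p q hp hq => simp only [subst, map_add] at *; rw [hp, hq]
  | mul_X p i hp =>
    simp only [subst, map_mul, aeval_X] at *
    rw [hp, eval_X]
    congr 1
    fin_cases i <;> simp

/-- Let `Δ = Δ̄ ≠ 0` and `a₀ ∈ ℂ`. If some `f ∈ ℂ[∂, λ]` satisfies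
(L3): `(λ−μ)·(f(∂,λ+μ) + a₀) = (∂+λ+Δμ)·f(∂,λ) + (∂+Δ̄λ)·f(∂+λ,μ)
− (∂+μ+Δλ)·f(∂,μ) − (∂+Δ̄μ)·f(∂+μ,λ)` in `ℂ[∂, λ, μ]` (variables `0 = ∂`, `1 = λ`,
`2 = μ`), then `a₀ = 0`: there is no nontrivial cocycle with constant `g ≡ a₀`
when `Δ = Δ̄`. -/
theorem no_constant_g_cocycle_equal_delta (Δ : ℂ) (hΔ : Δ ≠ 0) (a₀ : ℂ)
    (f : MvPolynomial (Fin 2) ℂ)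
    (hL3 : (X 1 - X 2) * (subst (X 0) (X 1 + X 2) f + C a₀)
        = (X 0 + X 1 + C Δ * X 2) * subst (X 0) (X 1) f
          + (X 0 + C Δ * X 1) * subst (X 0 + X 1) (X 2) f
          - (X 0 + X 2 + C Δ * X 1) * subst (X 0) (X 2) f
          - (X 0 + C Δ * X 2) * subst (X 0 + X 2) (X 1) f) :
    a₀ = 0 := by
  have h := congrArg (eval ![-Δ, 1, 0]) hL3
  simp only [map_mul, map_add, map_sub, eval_subst, eval_X, eval_C] at h
  norm_num [Matrix.cons_val_zero, Matrix.cons_val_one, Matrix.cons_val_two] at h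
  linear_combination h
end

section
/- Let Δ̄ ∈ ℂ with Δ̄ ≠ 0, set Δ = Δ̄ + 1, and let a₁ ∈ ℂ. Then the polynomials f(∂, λ) = (a₁/Δ̄)·∂ and g(∂, λ) = a₁·λ satisfy both identities in ℂ[∂, λ, μ]: (L3): (λ−μ)·(f(∂, λ+μ) + g(∂, λ+μ)) = (∂+λ+Δμ)·f(∂, λ) + (∂+Δ̄λ)·f(∂+λ, μ) − (∂+μ+Δλ)·f(∂, μ) − (∂+Δ̄μ)·f(∂+μ, λ), and (H3): −μ·g(∂, λ+μ) = (∂+Δ̄λ)·g(∂+λ, μ) − (∂+μ+Δλ)·g(∂, μ). -/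
open MvPolynomial

/-- Let `Δ̄ ≠ 0`, `Δ = Δ̄ + 1`, `a₁ ∈ ℂ`. Then `f(∂,λ) = (a₁/Δ̄)·∂` and `g(∂,λ) = a₁·λ`
satisfy both (L3): `(λ−μ)·(f(∂,λ+μ) + g(∂,λ+μ)) = (∂+λ+Δμ)·f(∂,λ) + (∂+Δ̄λ)·f(∂+λ,μ)
− (∂+μ+Δλ)·f(∂,μ) − (∂+Δ̄μ)·f(∂+μ,λ)` and (H3): `−μ·g(∂,λ+μ) = (∂+Δ̄λ)·g(∂+λ,μ)
− (∂+μ+Δλ)·g(∂,μ)` in `ℂ[∂, λ, μ]` (variables `0 = ∂`, `1 = λ`, `2 = μ`): these are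
the cocycles giving the nontrivial extensions with `Δ − Δ̄ = 1`. -/
theorem cocycle_delta_difference_one (Δ' a₁ : ℂ) (hΔ' : Δ' ≠ 0)
    (f g : MvPolynomial (Fin 2) ℂ)
    (hf : f = C (a₁ / Δ') * X 0) (hg : g = C a₁ * X 1) :
    ((X 1 - X 2) * (subst (X 0) (X 1 + X 2) f + subst (X 0) (X 1 + X 2) g)
        = (X 0 + X 1 + C (Δ' + 1) * X 2) * subst (X 0) (X 1) f
          + (X 0 + C Δ' * X 1) * subst (X 0 + X 1) (X 2) f
          - (X 0 + X 2 + C (Δ' + 1) * X 1) * subst (X 0) (X 2) f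
          - (X 0 + C Δ' * X 2) * subst (X 0 + X 2) (X 1) f)
    ∧ (-(X 2) * subst (X 0) (X 1 + X 2) g
        = (X 0 + C Δ' * X 1) * subst (X 0 + X 1) (X 2) g
          - (X 0 + X 2 + C (Δ' + 1) * X 1) * subst (X 0) (X 2) g) := by
  subst hf hg
  simp only [subst, map_mul, map_add, aeval_C, aeval_X, Matrix.cons_val_zero,
    Matrix.cons_val_one, Matrix.head_cons, algebraMap_eq, C_add, C_1]
  have h2 : (C a₁ : MvPolynomial (Fin 3) ℂ) = C (a₁ / Δ') * C Δ' := by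
    rw [← C_mul, div_mul_cancel₀ a₁ hΔ']
  refine ⟨?_, ?_⟩
  · linear_combination ((X 1 : MvPolynomial (Fin 3) ℂ) ^ 2 - X 2 ^ 2) * h2
  · ring
end

section
/- Let Δ, Δ̄ ∈ ℂ with Δ ≠ 0, Δ̄ ≠ 0 and Δ − Δ̄ = 2. Suppose g ∈ ℂ[∂, λ] is nonzero and homogeneous of total degree 2, and f ∈ ℂ[∂, λ], and both identities hold in ℂ[∂, λ, μ]: (L3): (λ−μ)·(f(∂, λ+μ) + g(∂, λ+μ)) = (∂+λ+Δμ)·f(∂, λ) + (∂+Δ̄λ)·f(∂+λ, μ) − (∂+μ+Δλ)·f(∂, μ) − (∂+Δ̄μ)·f(∂+μ, λ), and (H3): −μ·g(∂, λ+μ) = (∂+Δ̄λ)·g(∂+λ, μ) − (∂+μ+Δλ)·g(∂, μ). Then Δ = 1, Δ̄ = −1, and g(∂, λ) = a₁·(∂+λ)·λ for some a₁ ∈ ℂ, a₁ ≠ 0. -/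
open MvPolynomial

lemma deg2 (d : Fin 2 →₀ ℕ) : d.degree = d 0 + d 1 := by
  rw [Finsupp.degree_apply, Finset.sum_subset (Finset.subset_univ _)]
  · simp [Fin.sum_univ_two]
  · intro i _ hi; simpa using (Finsupp.notMem_support_iff.mp hi)

lemma rep2 (g : MvPolynomial (Fin 2) ℂ) (h : g.IsHomogeneous 2) :
    g = C (coeff (Finsupp.single 0 2) g) * X 0 ^ 2
      + C (coeff (Finsupp.single 0 1 + Finsupp.single 1 1) g) * (X 0 * X 1)
      + C (coeff (Finsupp.single 1 2) g) * X 1 ^ 2 := by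
  have hm : (X 0 * X 1 : MvPolynomial (Fin 2) ℂ)
      = monomial (Finsupp.single 0 1 + Finsupp.single 1 1) 1 := by
    rw [X, X, monomial_mul]; simp
  ext d
  rw [coeff_add, coeff_add, coeff_C_mul, coeff_C_mul, coeff_C_mul, X_pow_eq_monomial,
    X_pow_eq_monomial, hm, coeff_monomial, coeff_monomial, coeff_monomial]
  have ext2 : ∀ u v : Fin 2 →₀ ℕ, u = v ↔ (u 0 = v 0 ∧ u 1 = v 1) := by
    intro u v
    constructor
    · rintro rfl; exact ⟨rfl, rfl⟩
    · rintro ⟨h0, h1⟩; ext k; fin_cases k; exacts [h0, h1]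
  simp only [ext2, Finsupp.add_apply, Finsupp.single_apply, if_pos rfl]
  norm_num
  by_cases hdeg : d 0 + d 1 = 2
  · have h3 : d 0 = 0 ∨ d 0 = 1 ∨ d 0 = 2 := by omega
    rcases h3 with h0 | h0 | h0
    · rw [if_neg (by omega), if_neg (by omega), if_pos ⟨by omega, by omega⟩]
      have : d = Finsupp.single 1 2 := by
        ext k; fin_cases k <;> simp [Finsupp.single_apply] <;> omega
      rw [this]; ring
    · rw [if_neg (by omega), if_pos ⟨by omega, by omega⟩, if_neg (by omega)]
      have : d = Finsupp.single 0 1 + Finsupp.single 1 1 := by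
        ext k; fin_cases k <;> simp [Finsupp.single_apply, Finsupp.add_apply] <;> omega
      rw [this]; ring
    · rw [if_pos ⟨by omega, by omega⟩, if_neg (by omega), if_neg (by omega)]
      have : d = Finsupp.single 0 2 := by
        ext k; fin_cases k <;> simp [Finsupp.single_apply] <;> omega
      rw [this]; ring
  · rw [h.coeff_eq_zero (by rw [deg2]; exact hdeg), if_neg (by omega), if_neg (by omega),
      if_neg (by omega)]
    ring


noncomputable def Tmap (Δ Δ' : ℂ) (u : MvPolynomial (Fin 2) ℂ) : MvPolynomial (Fin 3) ℂ :=
  (X 0 + X 1 + C Δ * X 2) * subst (X 0) (X 1) u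
  + (X 0 + C Δ' * X 1) * subst (X 0 + X 1) (X 2) u
  - (X 0 + X 2 + C Δ * X 1) * subst (X 0) (X 2) u
  - (X 0 + C Δ' * X 2) * subst (X 0 + X 2) (X 1) u
  - (X 1 - X 2) * subst (X 0) (X 1 + X 2) u

lemma subst_hom {a b : MvPolynomial (Fin 3) ℂ} (ha : a.IsHomogeneous 1)
    (hb : b.IsHomogeneous 1) {u : MvPolynomial (Fin 2) ℂ} {k : ℕ}
    (hu : u.IsHomogeneous k) : (subst a b u).IsHomogeneous k := by
  have := hu.aeval (g := ![a, b]) (n := 1) (fun i => by fin_cases i <;> simpa)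
  simpa [subst] using this

lemma hom1X (i : Fin 3) : (X i : MvPolynomial (Fin 3) ℂ).IsHomogeneous 1 :=
  isHomogeneous_X _ _

lemma hom1CX (c : ℂ) (i : Fin 3) : (C c * X i : MvPolynomial (Fin 3) ℂ).IsHomogeneous 1 := by
  simpa using (isHomogeneous_C (Fin 3) c).mul (isHomogeneous_X _ i)

lemma Tmap_hom (Δ Δ' : ℂ) {u : MvPolynomial (Fin 2) ℂ} {k : ℕ} (hu : u.IsHomogeneous k) :
    (Tmap Δ Δ' u).IsHomogeneous (k + 1) := by
  have h1 : ∀ v : MvPolynomial (Fin 3) ℂ, v.IsHomogeneous 1 → ∀ a b : MvPolynomial (Fin 3) ℂ,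
      a.IsHomogeneous 1 → b.IsHomogeneous 1 → (v * subst a b u).IsHomogeneous (k + 1) := by
    intro v hv a b ha hb
    simpa [add_comm] using hv.mul (subst_hom ha hb hu)
  refine IsHomogeneous.sub (IsHomogeneous.sub (IsHomogeneous.sub (IsHomogeneous.add ?_ ?_) ?_) ?_) ?_
  · exact h1 _ (((hom1X 0).add (hom1X 1)).add (hom1CX Δ 2)) _ _ (hom1X 0) (hom1X 1)
  · exact h1 _ ((hom1X 0).add (hom1CX Δ' 1)) _ _ ((hom1X 0).add (hom1X 1)) (hom1X 2)
  · exact h1 _ (((hom1X 0).add (hom1X 2)).add (hom1CX Δ 1)) _ _ (hom1X 0) (hom1X 2)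
  · exact h1 _ ((hom1X 0).add (hom1CX Δ' 2)) _ _ ((hom1X 0).add (hom1X 2)) (hom1X 1)
  · exact h1 _ ((hom1X 1).sub (hom1X 2)) _ _ (hom1X 0) ((hom1X 1).add (hom1X 2))

lemma Tmap_add (Δ Δ' : ℂ) (u v : MvPolynomial (Fin 2) ℂ) :
    Tmap Δ Δ' (u + v) = Tmap Δ Δ' u + Tmap Δ Δ' v := by
  simp only [Tmap, subst, map_add]; ring

lemma Tmap_zero (Δ Δ' : ℂ) : Tmap Δ Δ' 0 = 0 := by
  simp only [Tmap, subst, map_zero]; ring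

lemma hcT (Δ Δ' : ℂ) (f : MvPolynomial (Fin 2) ℂ) :
    homogeneousComponent 3 (Tmap Δ Δ' f) = Tmap Δ Δ' (homogeneousComponent 2 f) := by
  induction f using MvPolynomial.induction_on' with
  | monomial d r =>
    have hmono : (monomial d r).IsHomogeneous d.degree := isHomogeneous_monomial r rfl
    rw [homogeneousComponent_of_mem ((mem_homogeneousSubmodule _ _).2 (Tmap_hom Δ Δ' hmono)),
      homogeneousComponent_of_mem ((mem_homogeneousSubmodule _ _).2 hmono)]
    by_cases hk : d.degree = 2
    · rw [if_pos (by omega), if_pos (by omega)]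
    · rw [if_neg (by omega), if_neg (by omega), Tmap_zero]
  | add p q ihp ihq =>
    rw [Tmap_add, map_add, ihp, ihq, map_add, Tmap_add]

/-- Let `Δ, Δ̄ ≠ 0` with `Δ − Δ̄ = 2`. If `g ∈ ℂ[∂, λ]` is nonzero homogeneous of total
degree 2 and `f ∈ ℂ[∂, λ]`, and the pair `(f, g)` satisfies
(L3): `(λ−μ)·(f(∂,λ+μ) + g(∂,λ+μ)) = (∂+λ+Δμ)·f(∂,λ) + (∂+Δ̄λ)·f(∂+λ,μ)
− (∂+μ+Δλ)·f(∂,μ) − (∂+Δ̄μ)·f(∂+μ,λ)` and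
(H3): `−μ·g(∂,λ+μ) = (∂+Δ̄λ)·g(∂+λ,μ) − (∂+μ+Δλ)·g(∂,μ)` in `ℂ[∂, λ, μ]`
(variables `0 = ∂`, `1 = λ`, `2 = μ`), then `Δ = 1`, `Δ̄ = −1` and
`g(∂,λ) = a₁·(∂+λ)·λ` for some nonzero `a₁ ∈ ℂ`. -/
theorem cocycle_delta_difference_two (Δ Δ' : ℂ) (hΔ : Δ ≠ 0) (hΔ' : Δ' ≠ 0)
    (hd : Δ - Δ' = 2) (f g : MvPolynomial (Fin 2) ℂ) (hg : g ≠ 0)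
    (hhom : g.IsHomogeneous 2)
    (hL3 : (X 1 - X 2) * (subst (X 0) (X 1 + X 2) f + subst (X 0) (X 1 + X 2) g)
        = (X 0 + X 1 + C Δ * X 2) * subst (X 0) (X 1) f
          + (X 0 + C Δ' * X 1) * subst (X 0 + X 1) (X 2) f
          - (X 0 + X 2 + C Δ * X 1) * subst (X 0) (X 2) f
          - (X 0 + C Δ' * X 2) * subst (X 0 + X 2) (X 1) f)
    (hH3 : -(X 2) * subst (X 0) (X 1 + X 2) g
        = (X 0 + C Δ' * X 1) * subst (X 0 + X 1) (X 2) g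
          - (X 0 + X 2 + C Δ * X 1) * subst (X 0) (X 2) g) :
    Δ = 1 ∧ Δ' = -1 ∧ ∃ a₁ : ℂ, a₁ ≠ 0 ∧ g = C a₁ * (X 0 + X 1) * X 1 := by
  -- explicit form of g
  have hgrep := rep2 g hhom
  set a := coeff (Finsupp.single 0 2) g with ha_def
  set b := coeff (Finsupp.single 0 1 + Finsupp.single 1 1) g with hb_def
  set c := coeff (Finsupp.single 1 2) g with hc_def
  -- extract degree-3 part of L3
  have hL3' : (X 1 - X 2) * subst (X 0) (X 1 + X 2) g = Tmap Δ Δ' f := by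
    rw [Tmap]; linear_combination hL3
  have hLg : ((X 1 - X 2 : MvPolynomial (Fin 3) ℂ)
      * subst (X 0) (X 1 + X 2) g).IsHomogeneous 3 := by
    have := ((hom1X 1).sub (hom1X 2)).mul
      (subst_hom (hom1X 0) ((hom1X 1).add (hom1X 2)) hhom)
    simpa using this
  have key3 : (X 1 - X 2) * subst (X 0) (X 1 + X 2) g
      = Tmap Δ Δ' (homogeneousComponent 2 f) := by
    have h := congrArg (homogeneousComponent 3) hL3'
    rwa [homogeneousComponent_of_mem ((mem_homogeneousSubmodule _ _).2 hLg), if_pos rfl,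
      hcT] at h
  have hfrep := rep2 (homogeneousComponent 2 f) (homogeneousComponent_isHomogeneous 2 f)
  set p := coeff (Finsupp.single 0 2) (homogeneousComponent 2 f) with hp_def
  set q := coeff (Finsupp.single 0 1 + Finsupp.single 1 1) (homogeneousComponent 2 f) with hq_def
  set r := coeff (Finsupp.single 1 2) (homogeneousComponent 2 f) with hr_def
  rw [hgrep] at hH3 key3
  rw [hfrep, Tmap] at key3
  -- evaluate hH3 at points
  have E1 := congrArg (eval ![(0:ℂ), 1, 0]) hH3
  have E2 := congrArg (eval ![(1:ℂ), 1, 0]) hH3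
  have E3 := congrArg (eval ![(0:ℂ), 1, 1]) hH3
  have E4 := congrArg (eval ![(0:ℂ), 0, 1]) key3
  have E5 := congrArg (eval ![(1:ℂ), 0, 1]) key3
  simp only [subst, map_add, map_mul, map_pow, map_sub, map_neg, aeval_X, aeval_C, eval_add,
    eval_mul, eval_pow, eval_sub, eval_neg, eval_X, eval_C, Matrix.cons_val_zero,
    Matrix.cons_val_one, Matrix.head_cons, algebraMap_eq, Matrix.cons_val_two, Matrix.tail_cons]
    at E1 E2 E3 E4 E5
  ring_nf at E1 E2 E3 E4 E5
  have ha : a = 0 := by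
    rcases mul_eq_zero.mp E1.symm with h | h
    · exact h
    · exact absurd h hΔ'
  have hcb : c = -(b * Δ') := by linear_combination -E3 - Δ' * ha + c * hd
  have h6 : Δ' * (p + b) = 0 := by linear_combination E4 + hcb
  have hpe : p + b = 0 := (mul_eq_zero.mp h6).resolve_left hΔ'
  have hb0 : b ≠ 0 := by
    intro hb
    apply hg
    rw [hgrep, ha, hb, show c = 0 by rw [hcb, hb]; ring]
    simp
  have h7 : b * (2 * Δ - 2) = 0 := by
    linear_combination (-1) * E5 - ha - hcb + (3 - Δ + 4 * Δ') * hpe + 3 * b * hd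
  have hΔ1 : Δ = 1 := by
    rcases mul_eq_zero.mp h7 with h | h
    · exact absurd h hb0
    · linear_combination h / 2
  have hΔ'1 : Δ' = -1 := by linear_combination hΔ1 - hd
  refine ⟨hΔ1, hΔ'1, b, hb0, ?_⟩
  rw [hgrep, ha, hcb, hΔ'1]
  simp only [map_zero]
  ring
end

section
/- Let Δ = 1, Δ̄ = −1, and let a₁, b ∈ ℂ. Then the polynomials f(∂, λ) = a₁·(λ² − ∂²) + b·(2∂+λ)·λ² and g(∂, λ) = a₁·(∂+λ)·λ satisfy both identities in ℂ[∂, λ, μ]: (L3): (λ−μ)·(f(∂, λ+μ) + g(∂, λ+μ)) = (∂+λ+Δμ)·f(∂, λ) + (∂+Δ̄λ)·f(∂+λ, μ) − (∂+μ+Δλ)·f(∂, μ) − (∂+Δ̄μ)·f(∂+μ, λ), and (H3): −μ·g(∂, λ+μ) = (∂+Δ̄λ)·g(∂+λ, μ) − (∂+μ+Δλ)·g(∂, μ). -/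
open MvPolynomial

/-- Let `Δ = 1`, `Δ̄ = −1` and `a₁, b ∈ ℂ`. Then `f(∂,λ) = a₁·(λ²−∂²) + b·(2∂+λ)·λ²`
and `g(∂,λ) = a₁·(∂+λ)·λ` satisfy both
(L3): `(λ−μ)·(f(∂,λ+μ) + g(∂,λ+μ)) = (∂+λ+Δμ)·f(∂,λ) + (∂+Δ̄λ)·f(∂+λ,μ)
− (∂+μ+Δλ)·f(∂,μ) − (∂+Δ̄μ)·f(∂+μ,λ)` and
(H3): `−μ·g(∂,λ+μ) = (∂+Δ̄λ)·g(∂+λ,μ) − (∂+μ+Δλ)·g(∂,μ)` in `ℂ[∂, λ, μ]`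
(variables `0 = ∂`, `1 = λ`, `2 = μ`): these are the cocycles giving the nontrivial
extensions with `(Δ, Δ̄) = (1, −1)`. -/
theorem cocycle_delta_one_minus_one (a₁ b : ℂ) (f g : MvPolynomial (Fin 2) ℂ)
    (hf : f = C a₁ * (X 1 ^ 2 - X 0 ^ 2) + C b * (2 * X 0 + X 1) * X 1 ^ 2)
    (hg : g = C a₁ * (X 0 + X 1) * X 1) :
    ((X 1 - X 2) * (subst (X 0) (X 1 + X 2) f + subst (X 0) (X 1 + X 2) g)
        = (X 0 + X 1 + C (1 : ℂ) * X 2) * subst (X 0) (X 1) f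
          + (X 0 + C (-1 : ℂ) * X 1) * subst (X 0 + X 1) (X 2) f
          - (X 0 + X 2 + C (1 : ℂ) * X 1) * subst (X 0) (X 2) f
          - (X 0 + C (-1 : ℂ) * X 2) * subst (X 0 + X 2) (X 1) f)
    ∧ (-(X 2) * subst (X 0) (X 1 + X 2) g
        = (X 0 + C (-1 : ℂ) * X 1) * subst (X 0 + X 1) (X 2) g
          - (X 0 + X 2 + C (1 : ℂ) * X 1) * subst (X 0) (X 2) g) := by
  subst hf hg
  constructor <;>
  · simp only [subst, map_add, map_sub, map_mul, map_pow, map_ofNat, map_one, map_neg, C_1, aeval_C, aeval_X,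
      Matrix.cons_val_zero, Matrix.cons_val_one, Matrix.head_cons]
    ring
end
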